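/- arXiv:1412.4259 — 4 statements merged into one kernel-verified Lean document; each statement's English description precedes it below -/
import Mathlib

section
/- For every d ≥ 1 and every d-VASS V = (Q,T) there exists a finite set S of linear path schemes over V such that: (i) for all states p,q ∈ Q and all u,v ∈ ℤ^d, p(u) →*_{ℤ^d} q(v) holds if and only if p(u) →^S_{ℤ^d} q(v) holds; (ii) every ρ ∈ S has length at most 2·|Q|·|T|; and (iii) every ρ ∈ S has at most |T| cycles. -/
namespace VASS

/-- Integer vectors of dimension `d`. -/
abbrev Vec (d : ℕ) := Fin d → ℤ

/-- A transition of a `d`-VASS: source state, update vector, target state. -/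
abbrev Trans (d : ℕ) := ℕ × Vec d × ℕ

/-- The norm of a vector: maximum of absolute values of its components. -/
def vnorm {d : ℕ} (z : Vec d) : ℕ := Finset.univ.sup fun i => (z i).natAbs

/-- The norm of a transition set. -/
def tnorm {d : ℕ} (T : Finset (Trans d)) : ℕ := T.sup fun t => vnorm t.2.1

/-- The displacement of a word of transitions. -/
def disp {d : ℕ} (π : List (Trans d)) : Vec d := (π.map fun t => t.2.1).sum

/-- `IsPathFrom p q π` : `π` is a path from `p` to `q`. -/
def IsPathFrom {d : ℕ} : ℕ → ℕ → List (Trans d) → Prop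
  | p, q, [] => p = q
  | p, q, t :: rest => t.1 = p ∧ IsPathFrom t.2.2 q rest

/-- ℕ^d as a subset of ℤ^d. -/
def NatSet (d : ℕ) : Set (Vec d) := {v | ∀ i, 0 ≤ v i}

/-- `p(u) →^π_A q(v)`. -/
def Run {d : ℕ} (T : Finset (Trans d)) (A : Set (Vec d)) (p : ℕ) (u : Vec d)
    (q : ℕ) (v : Vec d) (π : List (Trans d)) : Prop :=
  (∀ t ∈ π, t ∈ T) ∧ IsPathFrom p q π ∧ u ∈ A ∧ v = u + disp π ∧
    ∀ i, 1 ≤ i → i ≤ π.length → u + disp (π.take i) ∈ A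

/-- `p(u) →*_A q(v)`. -/
def Reach {d : ℕ} (T : Finset (Trans d)) (A : Set (Vec d)) (p : ℕ) (u : Vec d)
    (q : ℕ) (v : Vec d) : Prop := ∃ π, Run T A p u q v π

/-- A linear path scheme `α₀ β₁* α₁ ⋯ β_k* α_k`, presented as the initial
segment `α₀` together with the list of pairs `(βᵢ, αᵢ)`. -/
abbrev LPS (d : ℕ) := List (Trans d) × List (List (Trans d) × List (Trans d))

/-- The underlying word `α₀ β₁ α₁ ⋯ β_k α_k` of a linear path scheme. -/
def lpsSupport {d : ℕ} (ρ : LPS d) : List (Trans d) :=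
  ρ.1 ++ (ρ.2.map fun s => s.1 ++ s.2).flatten

/-- The length of a linear path scheme. -/
def lpsLen {d : ℕ} (ρ : LPS d) : ℕ := (lpsSupport ρ).length

/-- The number of cycles of a linear path scheme. -/
def numCycles {d : ℕ} (ρ : LPS d) : ℕ := ρ.2.length

/-- `ρ` is a linear path scheme from `p` to `q` over the transition set `T`:
its underlying word uses transitions from `T` and is a path from `p` to `q`,
and each `βᵢ` is a cycle. -/
def IsLPSFrom {d : ℕ} (T : Finset (Trans d)) (p q : ℕ) (ρ : LPS d) : Prop :=
  (∀ t ∈ lpsSupport ρ, t ∈ T) ∧ IsPathFrom p q (lpsSupport ρ) ∧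
    ∀ s ∈ ρ.2, s.1 ≠ [] ∧ ∃ r, IsPathFrom r r s.1

/-- The word `α₀ β₁^{e₁} α₁ ⋯ β_k^{e_k} α_k` of a linear path scheme. -/
def lpsWord {d : ℕ} (ρ : LPS d) (e : List ℕ) : List (Trans d) :=
  ρ.1 ++ (List.zipWith (fun s n => (List.replicate n s.1).flatten ++ s.2) ρ.2 e).flatten

/-- Membership in the language of a linear path scheme. -/
def InLang {d : ℕ} (ρ : LPS d) (π : List (Trans d)) : Prop :=
  ∃ e : List ℕ, e.length = numCycles ρ ∧ π = lpsWord ρ e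

/-- `p(u) →^S_A q(v)` for a finite set `S` of linear path schemes. -/
def SReach {d : ℕ} (T : Finset (Trans d)) (S : Finset (LPS d)) (A : Set (Vec d))
    (p : ℕ) (u : Vec d) (q : ℕ) (v : Vec d) : Prop :=
  ∃ ρ ∈ S, ∃ π, InLang ρ π ∧ Run T A p u q v π

/-- δ(ρ): the set of displacements of words in the language of `ρ`. -/
def DispSet {d : ℕ} (ρ : LPS d) : Set (Vec d) := {z | ∃ π, InLang ρ π ∧ z = disp π}

/-- A quadrant of ℤ². -/
def IsQuadrant (Z : Set (Vec 2)) : Prop :=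
  ∃ ε : Fin 2 → Bool, Z = {v | ∀ i, if ε i then 0 ≤ v i else v i ≤ 0}

/-- A linear path scheme is zigzag-free if the displacements of all its cycles
lie in a single quadrant. -/
def ZigzagFree (ρ : LPS 2) : Prop :=
  ∃ Z, IsQuadrant Z ∧ ∀ s ∈ ρ.2, disp s.1 ∈ Z


/-!
Over ℤ^d the intermediate configurations are unconstrained, so only the multiset of transitions
of a path matters. Cutting cycles out of a path `π` leaves a path `β` without
repeated states, and `π - β` is a circulation; greedily subtracting simple cycles, each with the
largest multiplicity that fits, writes it as `∑ mᵢ • γᵢ` with at most one cycle per transition of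
its support. Since `π` is connected, some remaining cycle always passes through a state already
visited, and it can be spliced in there as `γᵢ^(mᵢ-1)` followed by a plain copy of `γᵢ`. The
result is a linear path scheme of length `|β| + 2 ∑ |γᵢ| ≤ 2 |Q| |T|` with at most `|T|` cycles.
-/

variable {d : ℕ}

theorem _root_.List.Nodup.length_le_card_of_forall_mem {α : Type*} [DecidableEq α] {s : Finset α}
    {l : List α} (hl : l.Nodup) (hs : ∀ x ∈ l, x ∈ s) : l.length ≤ s.card := by
  rw [← List.toFinset_card_of_nodup hl]
  exact Finset.card_le_card fun x hx => hs x (List.mem_toFinset.1 hx)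

lemma exists_nsmul_le_of_nodup {α : Type*} [DecidableEq α] {C : Multiset α} {γ : List α}
    (hγ : γ.Nodup) (hne : γ ≠ []) (hγC : ∀ x ∈ γ, x ∈ C) :
    ∃ m, 1 ≤ m ∧ m • (γ : Multiset α) ≤ C ∧ ∃ x ∈ γ, x ∉ C - m • (γ : Multiset α) := by
  obtain ⟨x, hx, hmin⟩ :=
    γ.toFinset.exists_min_image (C.count ·) (List.toFinset_nonempty_iff γ |>.2 hne)
  rw [List.mem_toFinset] at hx
  have hcount : ∀ y ∈ γ, (γ : Multiset α).count y = 1 := fun y hy => by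
    simpa using List.count_eq_one_of_mem hγ hy
  have hle : C.count x • (γ : Multiset α) ≤ C := by
    refine Multiset.le_iff_count.2 fun y => ?_
    rw [Multiset.count_nsmul]
    by_cases hy : y ∈ γ
    · rw [hcount y hy, mul_one]
      exact hmin y (List.mem_toFinset.2 hy)
    · simp [hy]
  refine ⟨C.count x, Multiset.one_le_count_iff_mem.2 (hγC x hx), hle, x, hx, ?_⟩
  rw [← Multiset.count_eq_zero, Multiset.count_sub, Multiset.count_nsmul, hcount x hx, mul_one,
    Nat.sub_self]

lemma coe_flatten_replicate {α : Type*} (m : ℕ) (γ : List α) :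
    ((List.replicate m γ).flatten : Multiset α) = m • (γ : Multiset α) := by
  induction m with
  | zero => simp
  | succ m ih => rw [List.replicate_succ, List.flatten_cons, ← Multiset.coe_add, ih, succ_nsmul']

lemma finite_setOf_length_le_forall_mem {α : Type*} {s : Set α} (hs : s.Finite) (n : ℕ) :
    {l : List α | l.length ≤ n ∧ ∀ x ∈ l, x ∈ s}.Finite := by
  have := hs.to_subtype
  refine ((List.finite_length_le s n).image (List.map Subtype.val)).subset ?_
  rintro l ⟨hl, hls⟩
  lift l to List s using hls
  exact ⟨l, by simpa using hl, rfl⟩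

section Paths

variable {p q r : ℕ} {t : Trans d} {w x y γ : List (Trans d)}

@[simp] lemma isPathFrom_nil : IsPathFrom (d := d) p q [] ↔ p = q := Iff.rfl

@[simp] lemma isPathFrom_cons : IsPathFrom p q (t :: w) ↔ t.1 = p ∧ IsPathFrom t.2.2 q w :=
  Iff.rfl

lemma isPathFrom_append : IsPathFrom p q (x ++ y) ↔ ∃ r, IsPathFrom p r x ∧ IsPathFrom r q y := by
  induction x generalizing p with
  | nil => simp
  | cons t x ih => simp [ih, and_assoc]

lemma IsPathFrom.append (hx : IsPathFrom p r x) (hy : IsPathFrom r q y) :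
    IsPathFrom p q (x ++ y) :=
  isPathFrom_append.2 ⟨r, hx, hy⟩

lemma IsPathFrom.target_unique {q' : ℕ} (h : IsPathFrom p q w) (h' : IsPathFrom p q' w) :
    q = q' := by
  induction w generalizing p with
  | nil => exact h.symm.trans h'
  | cons t w ih => exact ih h.2 h'.2

lemma IsPathFrom.flatten_replicate (h : IsPathFrom p p γ) :
    ∀ n, IsPathFrom p p (List.replicate n γ).flatten
  | 0 => rfl
  | n + 1 => by
    rw [List.replicate_succ, List.flatten_cons]
    exact h.append (h.flatten_replicate n)

def IsCycle (γ : List (Trans d)) : Prop := γ ≠ [] ∧ ∃ r, IsPathFrom r r γ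

lemma IsCycle.eq_of_isPathFrom (hγ : IsCycle γ) (h : IsPathFrom p q γ) :
    p = q ∧ IsPathFrom p p γ := by
  obtain ⟨hne, r, hr⟩ := hγ
  obtain ⟨t, w, rfl⟩ := List.exists_cons_of_ne_nil hne
  obtain rfl : p = r := h.1.symm.trans hr.1
  exact ⟨(h.2.target_unique hr.2).symm, hr⟩

lemma IsPathFrom.exists_rotation (h : IsPathFrom r r γ) (ht : t ∈ γ) :
    ∃ γ', γ'.Perm γ ∧ IsPathFrom t.1 t.1 γ' := by
  obtain ⟨x, y, rfl⟩ := List.append_of_mem ht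
  obtain ⟨s, hx, hty⟩ := isPathFrom_append.1 h
  obtain rfl : t.1 = s := hty.1
  exact ⟨t :: y ++ x, List.perm_append_comm, hty.append hx⟩

lemma IsPathFrom.forall_source_mem {A : Set ℕ} (h : IsPathFrom p q w) (hp : p ∈ A)
    (hA : ∀ t ∈ w, t.1 ∈ A → t.2.2 ∈ A) : ∀ t ∈ w, t.1 ∈ A := by
  induction w generalizing p with
  | nil => simp
  | cons t w ih =>
    have htA : t.1 ∈ A := h.1 ▸ hp
    simp only [List.mem_cons, forall_eq_or_imp] at hA ⊢
    exact ⟨htA, ih h.2 (hA.1 htA) hA.2⟩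

end Paths

section Visits

variable {p q r : ℕ} {t : Trans d} {w γ : List (Trans d)}

def visits (p : ℕ) (w : List (Trans d)) : List ℕ := p :: w.map fun t => t.2.2

lemma visits_cons : visits p (t :: w) = p :: visits t.2.2 w := rfl

lemma mem_visits : r ∈ visits p w ↔ r = p ∨ ∃ t ∈ w, t.2.2 = r := by
  simp [visits]

lemma IsPathFrom.exists_split_of_mem_visits (h : IsPathFrom p q w) (hr : r ∈ visits p w) :
    ∃ x y, w = x ++ y ∧ IsPathFrom p r x ∧ IsPathFrom r q y := by
  rcases mem_visits.1 hr with rfl | ⟨t, ht, rfl⟩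
  · exact ⟨[], w, rfl, rfl, h⟩
  · obtain ⟨x, y, rfl⟩ := List.append_of_mem ht
    obtain ⟨s, hx, hty⟩ := isPathFrom_append.1 h
    exact ⟨x ++ [t], y, by simp, hx.append ⟨hty.1, rfl⟩, hty.2⟩

lemma IsPathFrom.exists_cycle_of_not_nodup (h : IsPathFrom p q w) (hw : ¬ (visits p w).Nodup) :
    ∃ x γ y r, w = x ++ γ ++ y ∧ γ ≠ [] ∧
      IsPathFrom p r x ∧ IsPathFrom r r γ ∧ IsPathFrom r q y := by
  induction w generalizing p with
  | nil => simp [visits] at hw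
  | cons t w ih =>
    obtain ⟨rfl, hw'⟩ := h
    rw [visits_cons, List.nodup_cons, not_and_or, not_not] at hw
    rcases hw with hmem | hnd
    · obtain ⟨x, y, rfl, hx, hy⟩ := hw'.exists_split_of_mem_visits hmem
      exact ⟨[], t :: x, y, t.1, by simp, by simp, rfl, ⟨rfl, hx⟩, hy⟩
    · obtain ⟨x, γ, y, r, rfl, hγ, hx, hγr, hy⟩ := ih hw' hnd
      exact ⟨t :: x, γ, y, r, by simp, hγ, ⟨rfl, hx⟩, hγr, hy⟩

lemma IsPathFrom.exists_sublist_visits_nodup (h : IsPathFrom p q w) :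
    ∃ β, β.Sublist w ∧ IsPathFrom p q β ∧ (visits p β).Nodup := by
  induction hn : w.length using Nat.strong_induction_on generalizing w with
  | _ n ih =>
  by_cases hw : (visits p w).Nodup
  · exact ⟨w, List.Sublist.refl w, h, hw⟩
  obtain ⟨x, γ, y, r, rfl, hγ, hx, -, hy⟩ := h.exists_cycle_of_not_nodup hw
  have hlt : (x ++ y).length < n := by
    have := List.length_pos_iff.2 hγ
    simp only [List.length_append] at hn ⊢
    omega
  obtain ⟨β, hβ, hβp, hβn⟩ := ih _ hlt (hx.append hy) rfl
  exact ⟨β, hβ.trans ((List.sublist_append_left x γ).append (List.Sublist.refl y)), hβp, hβn⟩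

lemma IsPathFrom.exists_simple_cycle (h : IsPathFrom r r γ) (hγ : γ ≠ []) :
    ∃ γ', γ'.Sublist γ ∧ γ' ≠ [] ∧ IsPathFrom r r γ' ∧ (γ'.map fun t => t.2.2).Nodup := by
  obtain ⟨t, w, rfl⟩ := List.exists_cons_of_ne_nil hγ
  obtain ⟨β, hβ, hβp, hβn⟩ := h.2.exists_sublist_visits_nodup
  exact ⟨t :: β, hβ.cons_cons t, List.cons_ne_nil _ _, ⟨h.1, hβp⟩, hβn⟩

end Visits

section Circulation

variable {p q r : ℕ} {w γ : List (Trans d)} {C : Multiset (Trans d)}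

def IsCirculation (C : Multiset (Trans d)) : Prop :=
  C.map Prod.fst = C.map fun t => t.2.2

lemma IsPathFrom.map_fst_add (h : IsPathFrom p q w) :
    (w : Multiset (Trans d)).map Prod.fst + {q} =
      (w : Multiset (Trans d)).map (fun t => t.2.2) + {p} := by
  induction w generalizing p with
  | nil => simp [show p = q from h]
  | cons t w ih =>
    obtain ⟨rfl, hw⟩ := h
    rw [← Multiset.cons_coe, Multiset.map_cons, Multiset.map_cons, Multiset.cons_add, ih hw]
    simp only [← Multiset.singleton_add]
    abel

lemma IsPathFrom.isCirculation (h : IsPathFrom r r γ) : IsCirculation (γ : Multiset (Trans d)) :=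
  add_right_cancel h.map_fst_add

lemma IsCirculation.nsmul (hC : IsCirculation C) (n : ℕ) : IsCirculation (n • C) := by
  unfold IsCirculation at hC ⊢
  rw [Multiset.map_nsmul, Multiset.map_nsmul, hC]

lemma isCirculation_sub {C D : Multiset (Trans d)} {X Y : Multiset ℕ} (hDC : D ≤ C)
    (hC : C.map Prod.fst + X = C.map (fun t => t.2.2) + Y)
    (hD : D.map Prod.fst + X = D.map (fun t => t.2.2) + Y) : IsCirculation (C - D) := by
  obtain ⟨E, rfl⟩ := exists_add_of_le hDC
  rw [add_tsub_cancel_left]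
  refine add_right_cancel (b := D.map (fun t => t.2.2) + Y) ?_
  calc E.map Prod.fst + (D.map (fun t => t.2.2) + Y)
      = E.map Prod.fst + (D.map Prod.fst + X) := by rw [hD]
    _ = (D + E).map Prod.fst + X := by rw [Multiset.map_add]; abel
    _ = (D + E).map (fun t => t.2.2) + Y := hC
    _ = E.map (fun t => t.2.2) + (D.map (fun t => t.2.2) + Y) := by rw [Multiset.map_add]; abel

lemma IsCirculation.sub (hC : IsCirculation C) {D : Multiset (Trans d)} (hD : IsCirculation D)
    (hDC : D ≤ C) : IsCirculation (C - D) :=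
  isCirculation_sub (X := 0) (Y := 0) hDC (by rw [add_zero, add_zero]; exact hC)
    (by rw [add_zero, add_zero]; exact hD)

lemma IsCirculation.exists_walk (hC : IsCirculation C) :
    ∀ n r, r ∈ C.map Prod.fst → ∃ w r', IsPathFrom r r' w ∧ w.length = n ∧ ∀ t ∈ w, t ∈ C
  | 0, r, _ => ⟨[], r, rfl, rfl, by simp⟩
  | n + 1, r, hr => by
    obtain ⟨t, ht, rfl⟩ := Multiset.mem_map.1 hr
    obtain ⟨w, r', hw, hlen, hwC⟩ :=
      hC.exists_walk n t.2.2 (hC ▸ Multiset.mem_map_of_mem _ ht)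
    exact ⟨t :: w, r', ⟨rfl, hw⟩, by simp [hlen], List.forall_mem_cons.2 ⟨ht, hwC⟩⟩

lemma IsCirculation.exists_simple_cycle {Q : Finset ℕ} (hC : IsCirculation C)
    (hQ : ∀ t ∈ C, t.2.2 ∈ Q) (hne : C ≠ 0) :
    ∃ γ, IsCycle γ ∧ (γ.map fun t => t.2.2).Nodup ∧ ∀ t ∈ γ, t ∈ C := by
  obtain ⟨t, ht⟩ := Multiset.exists_mem_of_ne_zero hne
  obtain ⟨w, r', hw, hlen, hwC⟩ :=
    hC.exists_walk Q.card t.2.2 (hC ▸ Multiset.mem_map_of_mem _ ht)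
  have hnd : ¬ (visits t.2.2 w).Nodup := fun hnd => by
    have := hnd.length_le_card_of_forall_mem (s := Q) fun x hx => by
      rcases mem_visits.1 hx with rfl | ⟨u, hu, rfl⟩
      exacts [hQ t ht, hQ u (hwC u hu)]
    simp [visits, hlen] at this
  obtain ⟨x, γ, y, r, rfl, hγ, -, hγr, -⟩ := hw.exists_cycle_of_not_nodup hnd
  obtain ⟨γ', hsub, hne', hγ', hnd'⟩ := hγr.exists_simple_cycle hγ
  exact ⟨γ', ⟨hne', r, hγ'⟩, hnd', fun u hu => hwC u (by simp [hsub.subset hu])⟩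

end Circulation

section Decomposition

def cycleSum (R : List (List (Trans d) × ℕ)) : Multiset (Trans d) :=
  (R.map fun s => s.2 • (s.1 : Multiset (Trans d))).sum

@[simp] lemma cycleSum_nil : cycleSum ([] : List (List (Trans d) × ℕ)) = 0 := rfl

@[simp] lemma cycleSum_cons (s : List (Trans d) × ℕ) (R : List (List (Trans d) × ℕ)) :
    cycleSum (s :: R) = s.2 • (s.1 : Multiset (Trans d)) + cycleSum R := by
  simp [cycleSum]

lemma cycleSum_eq_of_perm {R R' : List (List (Trans d) × ℕ)} (h : R.Perm R') :
    cycleSum R = cycleSum R' :=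
  (h.map _).sum_eq

lemma mem_cycleSum {t : Trans d} {R : List (List (Trans d) × ℕ)} :
    t ∈ cycleSum R ↔ ∃ s ∈ R, s.2 ≠ 0 ∧ t ∈ s.1 := by
  induction R with
  | nil => simp
  | cons s R ih => simp [Multiset.mem_add, Multiset.mem_nsmul, ih]

/-- Greedy decomposition: each extracted simple cycle is taken with the largest multiplicity
that fits, so it removes a transition from the support; hence the `k`-th cycle from the end has
length at most `min |Q| k`. -/
theorem IsCirculation.exists_cycleSum_eq {Q : Finset ℕ} {C : Multiset (Trans d)}
    (hC : IsCirculation C) (hQ : ∀ t ∈ C, t.2.2 ∈ Q) :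
    ∃ R : List (List (Trans d) × ℕ), cycleSum R = C ∧ (∀ s ∈ R, IsCycle s.1 ∧ 1 ≤ s.2) ∧
      R.length ≤ C.toFinset.card ∧
      (R.map fun s => s.1.length).sum ≤
        ∑ j ∈ Finset.range C.toFinset.card, min Q.card (j + 1) := by
  induction hn : C.toFinset.card using Nat.strong_induction_on generalizing C with
  | _ n ih =>
  rcases eq_or_ne C 0 with rfl | hne
  · exact ⟨[], rfl, by simp, by simp, by simp⟩
  obtain ⟨γ, hγ, hnd, hγC⟩ := hC.exists_simple_cycle hQ hne
  obtain ⟨m, hm, hle, x, hx, hxC⟩ := exists_nsmul_le_of_nodup (hnd.of_map _) hγ.1 hγC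
  obtain ⟨r, hr⟩ := hγ.2
  set C' := C - m • (γ : Multiset (Trans d))
  have hC'C : C' ≤ C := tsub_le_self
  have hcard : C'.toFinset.card < n := by
    rw [← hn]
    refine Finset.card_lt_card <| (Finset.ssubset_iff_of_subset ?_).2 ⟨x, ?_, ?_⟩
    · exact Multiset.toFinset_subset.2 (Multiset.subset_of_le hC'C)
    · exact Multiset.mem_toFinset.2 (hγC x hx)
    · exact fun h => hxC (Multiset.mem_toFinset.1 h)
  obtain ⟨R, hR, hRc, hRlen, hRsum⟩ := ih _ hcard (hC.sub (hr.isCirculation.nsmul m) hle)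
    (fun t ht => hQ t (Multiset.mem_of_le hC'C ht)) rfl
  have hγQ : γ.length ≤ Q.card := by
    simpa using hnd.length_le_card_of_forall_mem fun y hy => by
      obtain ⟨t, ht, rfl⟩ := List.mem_map.1 hy
      exact hQ t (hγC t ht)
  have hγn : γ.length ≤ n :=
    hn ▸ (hnd.of_map _).length_le_card_of_forall_mem fun y hy => Multiset.mem_toFinset.2 (hγC y hy)
  obtain ⟨k, rfl⟩ : ∃ k, n = k + 1 := ⟨n - 1, by omega⟩
  have hRk : (R.map fun s => s.1.length).sum ≤ ∑ j ∈ Finset.range k, min Q.card (j + 1) :=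
    hRsum.trans (Finset.sum_le_sum_of_subset (Finset.range_subset_range.2 (by omega)))
  refine ⟨(γ, m) :: R, ?_, ?_, ?_, ?_⟩
  · simp [hR, add_tsub_cancel_of_le hle]
  · simpa [hγ, hm] using hRc
  · simp only [List.length_cons]
    omega
  · rw [Finset.sum_range_succ]
    simp only [List.map_cons, List.sum_cons]
    have := le_min hγQ hγn
    omega

end Decomposition

section Decorated

/-- A letter of a decorated word: a plain transition `inl t`, or `inr (γ, m)`, which stands for
`γ^m` in the word and for `γ*` in the linear path scheme. -/
abbrev Item (d : ℕ) := Trans d ⊕ (List (Trans d) × ℕ)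

variable {p q r : ℕ} {t : Trans d} {γ : List (Trans d)} {D : List (Item d)}

def dSupport (D : List (Item d)) : List (Trans d) :=
  D.flatMap (Sum.elim (fun t => [t]) Prod.fst)

def dWord (D : List (Item d)) : List (Trans d) :=
  D.flatMap (Sum.elim (fun t => [t]) fun s => (List.replicate s.2 s.1).flatten)

def toLPS : List (Item d) → LPS d
  | [] => ([], [])
  | Sum.inl t :: D => (t :: (toLPS D).1, (toLPS D).2)
  | Sum.inr s :: D => ([], (s.1, (toLPS D).1) :: (toLPS D).2)

@[simp] lemma dSupport_nil : dSupport ([] : List (Item d)) = [] := rfl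

@[simp] lemma dSupport_cons_inl (t : Trans d) (D : List (Item d)) :
    dSupport (Sum.inl t :: D) = t :: dSupport D := rfl

@[simp] lemma dSupport_cons_inr (s : List (Trans d) × ℕ) (D : List (Item d)) :
    dSupport (Sum.inr s :: D) = s.1 ++ dSupport D := rfl

@[simp] lemma dSupport_append (D₁ D₂ : List (Item d)) :
    dSupport (D₁ ++ D₂) = dSupport D₁ ++ dSupport D₂ :=
  List.flatMap_append ..

@[simp] lemma dSupport_map_inl (γ : List (Trans d)) : dSupport (γ.map Sum.inl) = γ := by
  induction γ <;> simp_all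

@[simp] lemma dWord_nil : dWord ([] : List (Item d)) = [] := rfl

@[simp] lemma dWord_cons_inl (t : Trans d) (D : List (Item d)) :
    dWord (Sum.inl t :: D) = t :: dWord D := rfl

@[simp] lemma dWord_cons_inr (s : List (Trans d) × ℕ) (D : List (Item d)) :
    dWord (Sum.inr s :: D) = (List.replicate s.2 s.1).flatten ++ dWord D := rfl

@[simp] lemma dWord_append (D₁ D₂ : List (Item d)) : dWord (D₁ ++ D₂) = dWord D₁ ++ dWord D₂ :=
  List.flatMap_append ..

@[simp] lemma dWord_map_inl (γ : List (Trans d)) : dWord (γ.map Sum.inl) = γ := by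
  induction γ <;> simp_all

lemma mem_dWord_of_inl_mem (h : Sum.inl t ∈ D) : t ∈ dWord D := by
  obtain ⟨D₁, D₂, rfl⟩ := List.append_of_mem h
  simp

lemma mem_dSupport_of_mem_dWord (h : t ∈ dWord D) : t ∈ dSupport D := by
  induction D with
  | nil => simp at h
  | cons x D ih =>
    rcases x with u | s
    · simp only [dWord_cons_inl, List.mem_cons, dSupport_cons_inl] at h ⊢
      exact h.imp_right ih
    · simp only [dWord_cons_inr, List.mem_append, dSupport_cons_inr] at h ⊢
      refine h.imp (fun h => ?_) ih
      obtain ⟨l, hl, htl⟩ := List.mem_flatten.1 h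
      rwa [List.eq_of_mem_replicate hl] at htl

lemma lpsSupport_toLPS (D : List (Item d)) : lpsSupport (toLPS D) = dSupport D := by
  induction D with
  | nil => rfl
  | cons x D ih =>
    rcases x with t | s <;> simp only [toLPS, lpsSupport] at ih ⊢ <;> simp [← ih]

lemma numCycles_toLPS (D : List (Item d)) : numCycles (toLPS D) = D.countP Sum.isRight := by
  induction D with
  | nil => rfl
  | cons x D ih => rcases x with t | s <;> simp [toLPS, numCycles, List.countP_cons, ← ih]

lemma inLang_toLPS (D : List (Item d)) : InLang (toLPS D) (dWord D) := by
  induction D with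
  | nil => exact ⟨[], rfl, rfl⟩
  | cons x D ih =>
    obtain ⟨e, he, hw⟩ := ih
    rcases x with t | s
    · exact ⟨e, he, by simp [toLPS, lpsWord, hw]⟩
    · refine ⟨s.2 :: e, by simpa [toLPS, numCycles] using he, ?_⟩
      simp [toLPS, lpsWord, hw]

lemma exists_inr_of_mem_toLPS {c : List (Trans d) × List (Trans d)} (h : c ∈ (toLPS D).2) :
    ∃ s, Sum.inr s ∈ D ∧ c.1 = s.1 := by
  induction D with
  | nil => simp [toLPS] at h
  | cons x D ih =>
    rcases x with t | s
    · obtain ⟨s, hs, hc⟩ := ih h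
      exact ⟨s, List.mem_cons_of_mem _ hs, hc⟩
    · rcases List.mem_cons.1 h with rfl | h
      · exact ⟨s, List.mem_cons_self, rfl⟩
      · obtain ⟨s', hs, hc⟩ := ih h
        exact ⟨s', List.mem_cons_of_mem _ hs, hc⟩

/-- Besides being a path with starred cycles, every transition of the skeleton also occurs as a
plain letter: this is what allows a further cycle to be spliced in at any visited state. -/
structure IsDecoratedPath (p q : ℕ) (D : List (Item d)) : Prop where
  isPathFrom : IsPathFrom p q (dSupport D)
  isCycle : ∀ s, Sum.inr s ∈ D → IsCycle s.1
  inl_mem : ∀ t ∈ dSupport D, Sum.inl t ∈ D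

lemma isDecoratedPath_map_inl {w : List (Trans d)} (h : IsPathFrom p q w) :
    IsDecoratedPath p q (w.map Sum.inl) :=
  ⟨by simpa using h, by simp, by simp⟩

lemma IsDecoratedPath.isPathFrom_dWord (h : IsDecoratedPath p q D) : IsPathFrom p q (dWord D) := by
  obtain ⟨hpath, hcyc, -⟩ := h
  induction D generalizing p with
  | nil => exact hpath
  | cons x D ih =>
    rcases x with t | s
    · exact ⟨hpath.1, ih hpath.2 fun s hs => hcyc s (List.mem_cons_of_mem _ hs)⟩
    · obtain ⟨r, hs, hrest⟩ := isPathFrom_append.1 hpath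
      obtain ⟨rfl, hs⟩ := (hcyc s List.mem_cons_self).eq_of_isPathFrom hs
      exact (hs.flatten_replicate s.2).append
        (ih hrest fun s hs => hcyc s (List.mem_cons_of_mem _ hs))

lemma IsDecoratedPath.mem_dWord (h : IsDecoratedPath p q D) (ht : t ∈ dSupport D) :
    t ∈ dWord D :=
  mem_dWord_of_inl_mem (h.inl_mem t ht)

lemma IsDecoratedPath.isLPSFrom {T : Finset (Trans d)} (h : IsDecoratedPath p q D)
    (hT : ∀ t ∈ dSupport D, t ∈ T) : IsLPSFrom T p q (toLPS D) := by
  refine ⟨by simpa [lpsSupport_toLPS] using hT, by simpa [lpsSupport_toLPS] using h.isPathFrom,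
    fun c hc => ?_⟩
  obtain ⟨s, hs, hcs⟩ := exists_inr_of_mem_toLPS hc
  exact hcs ▸ h.isCycle s hs

end Decorated

section Insertion

variable {p q r : ℕ} {γ π : List (Trans d)} {D : List (Item d)}

lemma IsDecoratedPath.exists_split (h : IsDecoratedPath p q D) (hr : r ∈ visits p (dSupport D)) :
    ∃ D₁ D₂, D = D₁ ++ D₂ ∧ IsPathFrom p r (dSupport D₁) ∧ IsPathFrom r q (dSupport D₂) := by
  rcases mem_visits.1 hr with rfl | ⟨t, ht, rfl⟩
  · exact ⟨[], D, rfl, rfl, h.isPathFrom⟩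
  obtain ⟨D₁, D₂, rfl⟩ := List.append_of_mem (h.inl_mem t ht)
  obtain ⟨s, h₁, h₂⟩ := isPathFrom_append.1 (by simpa using h.isPathFrom)
  have ht : IsPathFrom s t.2.2 [t] := ⟨h₂.1, rfl⟩
  exact ⟨D₁ ++ [Sum.inl t], D₂, by simp, by simpa using h₁.append ht, h₂.2⟩

lemma IsDecoratedPath.exists_insert_cycle (h : IsDecoratedPath p q D)
    (hr : r ∈ visits p (dSupport D)) (hγ : γ ≠ []) (hγr : IsPathFrom r r γ) (m : ℕ) :
    ∃ D' : List (Item d), IsDecoratedPath p q D' ∧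
      (dWord D' : Multiset (Trans d)) = dWord D + (m + 1) • (γ : Multiset (Trans d)) ∧
      (dSupport D').length = (dSupport D).length + 2 * γ.length ∧
      D'.countP Sum.isRight = D.countP Sum.isRight + 1 := by
  obtain ⟨D₁, D₂, rfl, h₁, h₂⟩ := h.exists_split hr
  refine ⟨D₁ ++ Sum.inr (γ, m) :: (γ.map Sum.inl ++ D₂), ⟨?_, fun s hs => ?_, fun t ht => ?_⟩,
    ?_, ?_, ?_⟩
  · simpa using h₁.append (hγr.append (hγr.append h₂))
  · simp only [List.mem_append, List.mem_cons, Sum.inr.injEq, List.mem_map, reduceCtorEq,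
      and_false, exists_false, false_or] at hs
    rcases hs with hs | rfl | hs
    exacts [h.isCycle s (by simp [hs]), ⟨hγ, r, hγr⟩, h.isCycle s (by simp [hs])]
  · have := h.inl_mem t
    simp only [dSupport_append, dSupport_cons_inr, dSupport_map_inl, List.mem_append] at ht this
    simp only [List.mem_append, List.mem_cons, reduceCtorEq, List.mem_map, Sum.inl.injEq,
      exists_eq_right, false_or] at this ⊢
    tauto
  · simp only [dWord_append, dWord_cons_inr, dWord_map_inl, ← Multiset.coe_add,
      coe_flatten_replicate]
    rw [succ_nsmul]
    abel
  · simp only [dSupport_append, dSupport_cons_inr, dSupport_map_inl, List.length_append]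
    omega
  · simp only [List.countP_append, List.countP_cons, List.countP_map, Function.comp_def,
      Sum.isRight_inl, List.countP_false, Function.const_apply, zero_add, Sum.isRight_inr,
      ↓reduceIte]
    omega

lemma IsPathFrom.exists_cycle_touching (hπ : IsPathFrom p q π) {R : List (List (Trans d) × ℕ)}
    (hsum : (dWord D : Multiset (Trans d)) + cycleSum R = π)
    (hR : ∀ s ∈ R, IsCycle s.1 ∧ 1 ≤ s.2) (hRne : R ≠ []) :
    ∃ s ∈ R, ∃ t ∈ s.1, t.1 ∈ visits p (dSupport D) := by
  have hmem : ∀ t ∈ π, t ∈ dWord D ∨ ∃ s ∈ R, s.2 ≠ 0 ∧ t ∈ s.1 := fun t ht => by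
    rwa [← Multiset.mem_coe, ← hsum, Multiset.mem_add, mem_cycleSum, Multiset.mem_coe] at ht
  by_contra! hno
  -- Otherwise `π`, which starts at `p`, could never leave the states visited by the skeleton.
  have hsrc := hπ.forall_source_mem (A := {r | r ∈ visits p (dSupport D)}) List.mem_cons_self
    fun t ht htA => by
      rcases hmem t ht with h | ⟨s, hs, -, hts⟩
      · exact mem_visits.2 (Or.inr ⟨t, mem_dSupport_of_mem_dWord h, rfl⟩)
      · exact absurd htA (hno s hs t hts)
  obtain ⟨s, hs⟩ := List.exists_mem_of_ne_nil R hRne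
  obtain ⟨t, ht⟩ := List.exists_mem_of_ne_nil _ (hR s hs).1.1
  have htπ : t ∈ π := by
    rw [← Multiset.mem_coe, ← hsum, Multiset.mem_add, mem_cycleSum]
    exact Or.inr ⟨s, hs, by have := (hR s hs).2; omega, ht⟩
  exact hno s hs t ht (hsrc t htπ)

theorem IsDecoratedPath.exists_dWord_eq (hD : IsDecoratedPath p q D) (hπ : IsPathFrom p q π)
    {R : List (List (Trans d) × ℕ)} (hR : ∀ s ∈ R, IsCycle s.1 ∧ 1 ≤ s.2)
    (hsum : (dWord D : Multiset (Trans d)) + cycleSum R = π) :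
    ∃ D' : List (Item d), IsDecoratedPath p q D' ∧ (dWord D' : Multiset (Trans d)) = π ∧
      (dSupport D').length = (dSupport D).length + 2 * (R.map fun s => s.1.length).sum ∧
      D'.countP Sum.isRight = D.countP Sum.isRight + R.length := by
  induction hn : R.length generalizing R D with
  | zero =>
    obtain rfl := List.length_eq_zero_iff.1 hn
    exact ⟨D, hD, by simpa using hsum, by simp, by simp⟩
  | succ n ih =>
    obtain ⟨s, hs, t, ht, htv⟩ :=
      hπ.exists_cycle_touching hsum hR (List.ne_nil_of_length_eq_add_one hn)
    obtain ⟨⟨-, r, hr⟩, hs1⟩ := hR s hs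
    obtain ⟨γ, hγs, hγ⟩ := hr.exists_rotation ht
    obtain ⟨m, hm⟩ : ∃ m, s.2 = m + 1 := ⟨s.2 - 1, by omega⟩
    obtain ⟨D', hD', hw, hlen, hcnt⟩ :=
      hD.exists_insert_cycle htv (List.ne_nil_of_mem (hγs.mem_iff.2 ht)) hγ m
    have hRs := List.perm_cons_erase hs
    obtain ⟨D'', hD'', hw', hlen', hcnt'⟩ :=
      ih hD' (fun s' hs' => hR s' (List.mem_of_mem_erase hs'))
      (by rw [hw, Multiset.coe_eq_coe.2 hγs, ← hm, add_assoc, ← cycleSum_cons,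
        ← cycleSum_eq_of_perm hRs, hsum])
      (by rw [List.length_erase_of_mem hs, hn, Nat.add_sub_cancel])
    refine ⟨D'', hD'', hw', ?_, ?_⟩
    · rw [hlen', hlen, (hRs.map _).sum_eq, hγs.length_eq]
      simp only [List.map_cons, List.sum_cons]
      ring
    · rw [hcnt', hcnt]
      omega

end Insertion

lemma add_two_mul_le_of_le_sum_range_min {q b k n s : ℕ} (hb : b + 1 ≤ q) (hbk : b ≤ k)
    (hnk : n ≤ k) (hs : s ≤ ∑ j ∈ Finset.range n, min q (j + 1)) : b + 2 * s ≤ 2 * q * k := by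
  cases n with
  | zero =>
    simp only [Finset.range_zero, Finset.sum_empty, nonpos_iff_eq_zero] at hs
    subst hs
    nlinarith
  | succ n =>
    have hsum : ∑ j ∈ Finset.range n, min q (j + 1 + 1) ≤ ∑ _j ∈ Finset.range n, q :=
      Finset.sum_le_sum fun _ _ => min_le_left _ _
    rw [Finset.sum_range_succ'] at hs
    simp only [Finset.sum_const, Finset.card_range, smul_eq_mul] at hsum
    have h1 : min q (0 + 1) ≤ 1 := min_le_right _ _
    have h2 : q * (n + 1) ≤ q * k := Nat.mul_le_mul_left q hnk
    nlinarith

theorem IsPathFrom.exists_isDecoratedPath {p q : ℕ} {Q : Finset ℕ} {π : List (Trans d)}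
    (hπ : IsPathFrom p q π) (hp : p ∈ Q) (hQ : ∀ t ∈ π, t.2.2 ∈ Q) :
    ∃ D, IsDecoratedPath p q D ∧ (dWord D).Perm π ∧
      (dSupport D).length ≤ 2 * Q.card * π.toFinset.card ∧
      D.countP Sum.isRight ≤ π.toFinset.card := by
  obtain ⟨β, hβπ, hβ, hβnd⟩ := hπ.exists_sublist_visits_nodup
  have hβπ' : (β : Multiset (Trans d)) ≤ π := Multiset.coe_le.2 hβπ.subperm
  set C : Multiset (Trans d) := (π : Multiset (Trans d)) - (β : Multiset (Trans d))
  have hC : IsCirculation C := isCirculation_sub hβπ' hπ.map_fst_add hβ.map_fst_add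
  have hCπ : C ≤ π := tsub_le_self
  obtain ⟨R, hR, hRc, hRlen, hRsum⟩ :=
    hC.exists_cycleSum_eq (Q := Q) fun t ht => hQ t (Multiset.mem_of_le hCπ ht)
  obtain ⟨D, hD, hDπ, hlen, hcnt⟩ := (isDecoratedPath_map_inl hβ).exists_dWord_eq hπ hRc
    (by rw [dWord_map_inl, hR, add_tsub_cancel_of_le hβπ'])
  have hCcard : C.toFinset.card ≤ π.toFinset.card :=
    Finset.card_le_card (Multiset.toFinset_subset.2 (Multiset.subset_of_le hCπ))
  have hβQ : β.length + 1 ≤ Q.card := by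
    simpa [visits] using hβnd.length_le_card_of_forall_mem fun x hx => by
      rcases mem_visits.1 hx with rfl | ⟨t, ht, rfl⟩
      exacts [hp, hQ t (hβπ.subset ht)]
  have hβcard : β.length ≤ π.toFinset.card :=
    ((List.nodup_cons.1 hβnd).2.of_map _).length_le_card_of_forall_mem fun t ht =>
      List.mem_toFinset.2 (hβπ.subset ht)
  refine ⟨D, hD, Multiset.coe_eq_coe.1 hDπ, ?_, ?_⟩
  · rw [hlen, dSupport_map_inl]
    exact add_two_mul_le_of_le_sum_range_min hβQ hβcard hCcard hRsum
  · simp only [hcnt, List.countP_map, Function.comp_def, Sum.isRight_inl, List.countP_false,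
      Function.const_apply, zero_add]
    omega

lemma sublist_lpsSupport_of_mem_snd {ρ : LPS d} {c : List (Trans d) × List (Trans d)}
    (hc : c ∈ ρ.2) : (c.1 ++ c.2).Sublist (lpsSupport ρ) :=
  (List.sublist_flatten_of_mem (List.mem_map_of_mem (f := fun c => c.1 ++ c.2) hc)).trans
    (List.sublist_append_right _ _)

lemma finite_setOf_isLPSFrom (T : Finset (Trans d)) (B k : ℕ) :
    {ρ : LPS d | (∃ p q, IsLPSFrom T p q ρ) ∧ lpsLen ρ ≤ B ∧ numCycles ρ ≤ k}.Finite := by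
  set W := {l : List (Trans d) | l.length ≤ B ∧ ∀ x ∈ l, x ∈ (T : Set (Trans d))}
  have hW : W.Finite := finite_setOf_length_le_forall_mem T.finite_toSet B
  have hmem : ∀ {ρ : LPS d} {l}, (∀ t ∈ lpsSupport ρ, t ∈ T) → lpsLen ρ ≤ B →
      l.Sublist (lpsSupport ρ) → l ∈ W := fun hT hB hl =>
    ⟨hl.length_le.trans hB, fun t ht => hT t (hl.subset ht)⟩
  refine (hW.prod (finite_setOf_length_le_forall_mem (hW.prod hW) k)).subset ?_
  rintro ρ ⟨⟨p, q, hT, -, -⟩, hB, hk⟩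
  refine ⟨hmem hT hB (List.sublist_append_left _ _), hk, fun c hc => ⟨?_, ?_⟩⟩
  · exact hmem hT hB ((List.sublist_append_left _ _).trans (sublist_lpsSupport_of_mem_snd hc))
  · exact hmem hT hB ((List.sublist_append_right _ _).trans (sublist_lpsSupport_of_mem_snd hc))

/-- Proposition on Z-reachability. For every `d ≥ 1` and every
`d`-VASS, the ℤ-reachability relation is captured by a finite set of linear path
schemes of length at most `2·|Q|·|T|` with at most `|T|` cycles. -/
theorem statement1 :
    ∀ d : ℕ, 1 ≤ d → ∀ (Q : Finset ℕ) (T : Finset (Trans d)),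
      (∀ t ∈ T, t.1 ∈ Q ∧ t.2.2 ∈ Q) →
      ∃ S : Finset (LPS d),
        (∀ ρ ∈ S, ∃ p q, IsLPSFrom T p q ρ) ∧
        (∀ p ∈ Q, ∀ q ∈ Q, ∀ u v : Vec d,
          (Reach T Set.univ p u q v ↔ SReach T S Set.univ p u q v)) ∧
        (∀ ρ ∈ S, lpsLen ρ ≤ 2 * Q.card * T.card) ∧
        (∀ ρ ∈ S, numCycles ρ ≤ T.card) := by
  intro d _ Q T hT
  have hS := finite_setOf_isLPSFrom T (2 * Q.card * T.card) T.card
  refine ⟨hS.toFinset, fun ρ hρ => (hS.mem_toFinset.1 hρ).1, fun p hp q _ u v => ⟨?_, ?_⟩,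
    fun ρ hρ => (hS.mem_toFinset.1 hρ).2.1, fun ρ hρ => (hS.mem_toFinset.1 hρ).2.2⟩
  · rintro ⟨π, hπT, hπ, -, rfl, -⟩
    obtain ⟨D, hD, hDπ, hlen, hcnt⟩ :=
      hπ.exists_isDecoratedPath hp fun t ht => (hT t (hπT t ht)).2
    have hπcard : π.toFinset.card ≤ T.card :=
      Finset.card_le_card fun t ht => hπT t (List.mem_toFinset.1 ht)
    have hwT : ∀ t ∈ dWord D, t ∈ T := fun t ht => hπT t (hDπ.subset ht)
    refine ⟨toLPS D, hS.mem_toFinset.2 ⟨⟨p, q, hD.isLPSFrom fun t ht => hwT t (hD.mem_dWord ht)⟩,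
      ?_, ?_⟩, dWord D, inLang_toLPS D, hwT, hD.isPathFrom_dWord, trivial, ?_, fun _ _ _ => trivial⟩
    · rw [lpsLen, lpsSupport_toLPS]
      exact hlen.trans (Nat.mul_le_mul_left _ hπcard)
    · rw [numCycles_toLPS]
      exact hcnt.trans hπcard
    · rw [disp, disp, (hDπ.map _).sum_eq]
  · rintro ⟨ρ, -, π, -, hrun⟩
    exact ⟨π, hrun⟩

end VASS
end

section
/- Let G = (U,E) be a finite directed graph (with E ⊆ U×Σ×U for some set Σ). There exists a finite set S of linear path schemes over G such that: (i) the set of Parikh images of paths of G equals the union over ρ ∈ S of the set of Parikh images of words in the language of ρ; (ii) every ρ ∈ S has length at most 2·|U|·|E|; and (iii) every ρ ∈ S has at most |E| cycles. -/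
namespace LabeledGraph

variable {ν α : Type} [DecidableEq ν] [DecidableEq α]

/-- `IsPathFrom p q π` : the word of edges `π` is a path from `p` to `q`. -/
def IsPathFrom : ν → ν → List (ν × α × ν) → Prop
  | p, q, [] => p = q
  | p, q, e :: rest => e.1 = p ∧ IsPathFrom e.2.2 q rest

/-- The Parikh image of a word of edges. -/
def parikh (π : List (ν × α × ν)) : (ν × α × ν) → ℕ := fun e => π.count e

/-- A linear path scheme, presented as the initial segment `α₀` together with
the list of pairs `(βᵢ, αᵢ)`. -/
abbrev LPS (ν α : Type) := List (ν × α × ν) × List (List (ν × α × ν) × List (ν × α × ν))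

/-- The underlying word `α₀ β₁ α₁ ⋯ β_k α_k` of a linear path scheme. -/
def lpsSupport (ρ : LPS ν α) : List (ν × α × ν) :=
  ρ.1 ++ (ρ.2.map fun s => s.1 ++ s.2).flatten

/-- The length of a linear path scheme. -/
def lpsLen (ρ : LPS ν α) : ℕ := (lpsSupport ρ).length

/-- The number of cycles of a linear path scheme. -/
def numCycles (ρ : LPS ν α) : ℕ := ρ.2.length

/-- `ρ` is a linear path scheme from `p` to `q` over the edge set `E`. -/
def IsLPSFrom (E : Finset (ν × α × ν)) (p q : ν) (ρ : LPS ν α) : Prop :=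
  (∀ e ∈ lpsSupport ρ, e ∈ E) ∧ IsPathFrom p q (lpsSupport ρ) ∧
    ∀ s ∈ ρ.2, s.1 ≠ [] ∧ ∃ r, IsPathFrom r r s.1

/-- The word `α₀ β₁^{e₁} α₁ ⋯ β_k^{e_k} α_k` of a linear path scheme. -/
def lpsWord (ρ : LPS ν α) (e : List ℕ) : List (ν × α × ν) :=
  ρ.1 ++ (List.zipWith (fun s n => (List.replicate n s.1).flatten ++ s.2) ρ.2 e).flatten

/-- Membership in the language of a linear path scheme. -/
def InLang (ρ : LPS ν α) (π : List (ν × α × ν)) : Prop :=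
  ∃ e : List ℕ, e.length = numCycles ρ ∧ π = lpsWord ρ e

end LabeledGraph

/-!
Shortcut the path `π` to a sub-path `π₀` that still uses every edge of `π` and has at most `|U|`
edges per distinct edge: cut `π` at the last edge occurring in it for the first time, recurse on
the part before it and erase the loops of the part after it, all of whose edges occur earlier. The
edges of `π` left over form a circulation, which splits into at most `|E|` simple cycles (of
length at most `|U|`) with multiplicities, by repeatedly subtracting a simple cycle as often as
its rarest edge occurs. Each of these cycles shares an edge with `π₀`, so it can be rotated and
inserted in front of that edge; the resulting linear path scheme has length at most
`|U||E| + |E||U|` and a word with the Parikh image of `π`.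
-/

theorem List.exists_eq_append_cons_notMem_subset {β : Type*} [DecidableEq β] {l : List β}
    (hl : l ≠ []) : ∃ l₁ a l₂, l = l₁ ++ a :: l₂ ∧ a ∉ l₁ ∧ l₂ ⊆ a :: l₁ := by
  induction l using List.reverseRecOn with
  | nil => exact absurd rfl hl
  | append_singleton l x ih =>
    by_cases hx : x ∈ l
    · obtain ⟨l₁, a, l₂, rfl, ha, hsub⟩ := ih (List.ne_nil_of_mem hx)
      refine ⟨l₁, a, l₂ ++ [x], by simp, ha,
        List.append_subset.2 ⟨hsub, List.cons_subset.2 ⟨?_, List.nil_subset _⟩⟩⟩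
      simp only [List.mem_append, List.mem_cons] at hx
      rcases hx with hx | rfl | hx
      · exact List.mem_cons_of_mem a hx
      · exact List.mem_cons_self
      · exact hsub hx
    · exact ⟨l, x, [], rfl, hx, List.nil_subset _⟩

theorem List.Nodup.length_le_card_of_forall_mem_s2 {β : Type*} [DecidableEq β] {l : List β}
    {s : Finset β} (hl : l.Nodup) (hs : ∀ x ∈ l, x ∈ s) : l.length ≤ s.card := by
  rw [← List.toFinset_card_of_nodup hl]
  exact Finset.card_le_card fun x hx => hs x (List.mem_toFinset.1 hx)

theorem List.finite_setOf_length_le_forall_mem {β : Type*} {s : Set β} (hs : s.Finite)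
    (n : ℕ) : {l : List β | l.length ≤ n ∧ ∀ x ∈ l, x ∈ s}.Finite := by
  have := hs.to_subtype
  refine ((List.finite_length_le s n).image (List.map Subtype.val)).subset ?_
  rintro l ⟨hl, hls⟩
  lift l to List s using hls
  exact ⟨l, by simpa using hl, rfl⟩

theorem Multiset.coe_flatten_replicate {β : Type*} (n : ℕ) (l : List β) :
    ((List.replicate n l).flatten : Multiset β) = n • (l : Multiset β) := by
  induction n with
  | zero => rfl
  | succ n ih => rw [List.replicate_succ, List.flatten_cons, ← Multiset.coe_add, ih, succ_nsmul']

theorem Multiset.nsmul_le_of_nodup {β : Type*} [DecidableEq β] {s M : Multiset β} (hs : s.Nodup)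
    {m : ℕ} (h : ∀ x ∈ s, m ≤ M.count x) : m • s ≤ M := by
  refine Multiset.le_iff_count.2 fun x => ?_
  rw [Multiset.count_nsmul]
  by_cases hx : x ∈ s
  · rw [Multiset.count_eq_one_of_mem hs hx, mul_one]
    exact h x hx
  · rw [Multiset.count_eq_zero_of_notMem hx, mul_zero]
    exact Nat.zero_le _

namespace LabeledGraph

variable {ν α : Type}

def IsCycle (c : List (ν × α × ν)) : Prop := c ≠ [] ∧ ∃ r, IsPathFrom r r c

def IsCirculation (M : Multiset (ν × α × ν)) : Prop := M.map Prod.fst = M.map (·.2.2)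

namespace IsPathFrom

variable {p q : ν} {π : List (ν × α × ν)}

theorem append_iff {π' : List (ν × α × ν)} :
    IsPathFrom p q (π ++ π') ↔ ∃ v, IsPathFrom p v π ∧ IsPathFrom v q π' := by
  induction π generalizing p with
  | nil => exact ⟨fun h => ⟨p, rfl, h⟩, fun ⟨_, rfl, h⟩ => h⟩
  | cons e π ih => simp only [List.cons_append, IsPathFrom, ih, and_assoc, exists_and_left]

theorem append {v : ν} {π' : List (ν × α × ν)} (h : IsPathFrom p v π) (h' : IsPathFrom v q π') :
    IsPathFrom p q (π ++ π') :=
  append_iff.2 ⟨v, h, h'⟩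

theorem target_unique {q' : ν} (h : IsPathFrom p q π) (h' : IsPathFrom p q' π) : q = q' := by
  induction π generalizing p with
  | nil => exact h.symm.trans h'
  | cons e π ih => exact ih h.2 h'.2

theorem source_unique {p' q' : ν} (h : IsPathFrom p q π)
    (h' : IsPathFrom p' q' π) (hπ : π ≠ []) : p = p' := by
  cases π with
  | nil => exact absurd rfl hπ
  | cons e π => exact h.1.symm.trans h'.1

theorem map_fst_append (h : IsPathFrom p q π) :
    π.map Prod.fst ++ [q] = p :: π.map (·.2.2) := by
  induction π generalizing p with
  | nil => exact congrArg (fun x => [x]) h.symm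
  | cons e π ih => simp only [List.map_cons, List.cons_append, ih h.2, h.1]

theorem mem_trace (h : IsPathFrom p q π) : q ∈ p :: π.map (·.2.2) := by
  rw [← h.map_fst_append]; simp

theorem replicate_flatten (h : IsPathFrom p p π) (n : ℕ) :
    IsPathFrom p p (List.replicate n π).flatten := by
  induction n with
  | zero => rfl
  | succ n ih => rw [List.replicate_succ, List.flatten_cons]; exact h.append ih

theorem exists_append_of_mem_trace {x : ν} (h : IsPathFrom p q π)
    (hx : x ∈ p :: π.map (·.2.2)) :
    ∃ π₁ π₂, π = π₁ ++ π₂ ∧ IsPathFrom p x π₁ ∧ IsPathFrom x q π₂ := by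
  induction π generalizing p with
  | nil => exact ⟨[], [], rfl, (List.mem_singleton.1 hx).symm, (List.mem_singleton.1 hx) ▸ h⟩
  | cons e π ih =>
    rcases List.mem_cons.1 hx with rfl | hx
    · exact ⟨[], e :: π, rfl, rfl, h⟩
    · obtain ⟨π₁, π₂, rfl, h₁, h₂⟩ := ih h.2 (by simpa using hx)
      exact ⟨e :: π₁, π₂, rfl, ⟨h.1, h₁⟩, h₂⟩

theorem exists_sublist_nodup_trace (h : IsPathFrom p q π) :
    ∃ π', π'.Sublist π ∧ IsPathFrom p q π' ∧ (p :: π'.map (·.2.2)).Nodup := by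
  induction π generalizing p with
  | nil => exact ⟨[], List.Sublist.refl _, h, List.nodup_singleton p⟩
  | cons e π ih =>
    obtain ⟨π', hsub, hπ', hnd⟩ := ih h.2
    by_cases hp : p ∈ e.2.2 :: π'.map (·.2.2)
    · obtain ⟨π₁, π₂, rfl, h₁, h₂⟩ := hπ'.exists_append_of_mem_trace hp
      refine ⟨π₂, (List.sublist_append_right π₁ π₂).trans (hsub.cons e), h₂, ?_⟩
      have hnd' : ((e.2.2 :: π₁.map (·.2.2)) ++ π₂.map (·.2.2)).Nodup := by simpa using hnd
      rw [List.nodup_append] at hnd'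
      exact List.nodup_cons.2 ⟨fun hp₂ => hnd'.2.2 _ h₁.mem_trace _ hp₂ rfl, hnd'.2.1⟩
    · exact ⟨e :: π', hsub.cons_cons e, ⟨h.1, hπ'⟩, List.nodup_cons.2 ⟨hp, hnd⟩⟩

theorem exists_isCycle_infix (h : IsPathFrom p q π)
    (hπ : ¬(π.map Prod.fst).Nodup) :
    ∃ c, c.IsInfix π ∧ IsCycle c ∧ (c.map Prod.fst).Nodup := by
  induction π generalizing p with
  | nil => exact absurd List.nodup_nil hπ
  | cons e π ih =>
    by_cases hnd : (π.map Prod.fst).Nodup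
    · have he : e.1 ∈ π.map Prod.fst := by
        by_contra he
        exact hπ (List.nodup_cons.2 ⟨he, hnd⟩)
      obtain ⟨e', he', hee'⟩ := List.mem_map.1 he
      obtain ⟨π₁, π₂, rfl⟩ := List.append_of_mem he'
      obtain ⟨v, h₁, hv, -⟩ := append_iff.1 h.2
      have hnd' : (π₁.map Prod.fst ++ e'.1 :: π₂.map Prod.fst).Nodup := by simpa using hnd
      refine ⟨e :: π₁, (List.prefix_append (e :: π₁) (e' :: π₂)).isInfix,
        ⟨List.cons_ne_nil _ _, e.1, rfl, hee' ▸ hv ▸ h₁⟩, ?_⟩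
      rw [List.map_cons, ← hee']
      exact List.nodup_cons.2 ⟨fun hmem => (List.nodup_append.1 hnd').2.2 _ hmem _
        List.mem_cons_self rfl, (List.nodup_append.1 hnd').1⟩
    · obtain ⟨c, hc, hcyc, hcnd⟩ := ih h.2 hnd
      exact ⟨c, hc.trans (List.suffix_cons e π).isInfix, hcyc, hcnd⟩

theorem exists_perm_cons_of_mem (h : IsPathFrom p p π) {e : ν × α × ν} (he : e ∈ π) :
    ∃ γ, IsPathFrom e.1 e.1 (e :: γ) ∧ (e :: γ).Perm π := by
  obtain ⟨π₁, π₂, rfl⟩ := List.append_of_mem he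
  obtain ⟨v, h₁, h₂⟩ := append_iff.1 h
  exact ⟨π₂ ++ π₁, h₂.1 ▸ h₂.append h₁, List.perm_append_comm (l₁ := e :: π₂)⟩

theorem map_fst_add (h : IsPathFrom p q π) :
    (π : Multiset (ν × α × ν)).map Prod.fst + {q} =
      (π : Multiset (ν × α × ν)).map (·.2.2) + {p} := by
  have := congrArg ((↑) : List ν → Multiset ν) h.map_fst_append
  simpa [← Multiset.coe_add, add_comm] using this

theorem isCirculation (h : IsPathFrom p p π) : IsCirculation (π : Multiset (ν × α × ν)) :=
  add_right_cancel h.map_fst_add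

end IsPathFrom

theorem exists_isPathFrom_length {s : Set (ν × α × ν)} (hs : ∀ e ∈ s, ∃ e' ∈ s, e'.1 = e.2.2)
    (n : ℕ) {e : ν × α × ν} (he : e ∈ s) :
    ∃ π q, IsPathFrom e.1 q π ∧ π.length = n ∧ ∀ x ∈ π, x ∈ s := by
  induction n generalizing e with
  | zero => exact ⟨[], e.1, rfl, rfl, by simp⟩
  | succ n ih =>
    obtain ⟨e', he', hee'⟩ := hs e he
    obtain ⟨π, q, hπ, hlen, hπs⟩ := ih he'
    refine ⟨e :: π, q, ⟨rfl, hee' ▸ hπ⟩, by simp [hlen], ?_⟩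
    rintro x (_ | ⟨_, hx⟩)
    exacts [he, hπs x hx]

/-- Following successors inside `s` for more than `|U|` steps repeats a vertex. -/
theorem exists_isCycle_of_forall_exists_succ [DecidableEq ν] (U : Finset ν)
    {s : Set (ν × α × ν)} (hU : ∀ e ∈ s, e.1 ∈ U) (hs : ∀ e ∈ s, ∃ e' ∈ s, e'.1 = e.2.2)
    {e : ν × α × ν} (he : e ∈ s) :
    ∃ c, IsCycle c ∧ (c.map Prod.fst).Nodup ∧ ∀ x ∈ c, x ∈ s := by
  obtain ⟨π, q, hπ, hlen, hπs⟩ := exists_isPathFrom_length hs (U.card + 1) he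
  have hπnd : ¬(π.map Prod.fst).Nodup := fun hnd => by
    have := hnd.length_le_card_of_forall_mem_s2 (s := U) (by
      simp only [List.mem_map]
      rintro _ ⟨x, hx, rfl⟩
      exact hU x (hπs x hx))
    simp [hlen] at this
  obtain ⟨c, hc, hcyc, hcnd⟩ := hπ.exists_isCycle_infix hπnd
  exact ⟨c, hcyc, hcnd, fun x hx => hπs x (hc.subset hx)⟩

theorem IsCirculation.nsmul {M : Multiset (ν × α × ν)} (hM : IsCirculation M) (n : ℕ) :
    IsCirculation (n • M) := by
  unfold IsCirculation at hM ⊢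
  rw [Multiset.map_nsmul, Multiset.map_nsmul, hM]

theorem IsCirculation.exists_succ {M : Multiset (ν × α × ν)} (hM : IsCirculation M)
    {e : ν × α × ν} (he : e ∈ M) : ∃ e' ∈ M, e'.1 = e.2.2 :=
  Multiset.mem_map.1 (hM ▸ Multiset.mem_map_of_mem _ he)

-- As regular expressions, `consEdge e ρ = e ρ` and `consCycle γ ρ = γ* ρ`.
def consEdge (e : ν × α × ν) (ρ : LPS ν α) : LPS ν α := (e :: ρ.1, ρ.2)

def consCycle (γ : List (ν × α × ν)) (ρ : LPS ν α) : LPS ν α := ([], (γ, ρ.1) :: ρ.2)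

@[simp] theorem lpsSupport_consEdge (e : ν × α × ν) (ρ : LPS ν α) :
    lpsSupport (consEdge e ρ) = e :: lpsSupport ρ := rfl

@[simp] theorem lpsSupport_consCycle (γ : List (ν × α × ν)) (ρ : LPS ν α) :
    lpsSupport (consCycle γ ρ) = γ ++ lpsSupport ρ := by
  simp [lpsSupport, consCycle]

@[simp] theorem lpsWord_consEdge (e : ν × α × ν) (ρ : LPS ν α) (es : List ℕ) :
    lpsWord (consEdge e ρ) es = e :: lpsWord ρ es := rfl

@[simp] theorem lpsWord_consCycle (γ : List (ν × α × ν)) (ρ : LPS ν α) (n : ℕ) (es : List ℕ) :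
    lpsWord (consCycle γ ρ) (n :: es) = (List.replicate n γ).flatten ++ lpsWord ρ es := by
  simp [lpsWord, consCycle]

@[simp] theorem numCycles_consEdge (e : ν × α × ν) (ρ : LPS ν α) :
    numCycles (consEdge e ρ) = numCycles ρ := rfl

@[simp] theorem numCycles_consCycle (γ : List (ν × α × ν)) (ρ : LPS ν α) :
    numCycles (consCycle γ ρ) = numCycles ρ + 1 := rfl

theorem LPS.induction {motive : LPS ν α → Prop} (nil : motive ([], []))
    (consEdge : ∀ e ρ, motive ρ → motive (consEdge e ρ))
    (consCycle : ∀ γ ρ, motive ρ → motive (consCycle γ ρ)) (ρ : LPS ν α) : motive ρ := by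
  obtain ⟨α₀, l⟩ := ρ
  induction l generalizing α₀ with
  | nil =>
    induction α₀ with
    | nil => exact nil
    | cons e α₀ ih => exact consEdge e _ ih
  | cons s l ih =>
    induction α₀ with
    | nil => exact consCycle s.1 (s.2, l) (ih s.2)
    | cons e α₀ ihα => exact consEdge e _ ihα

theorem infix_lpsSupport_of_mem {ρ : LPS ν α} {s : List (ν × α × ν) × List (ν × α × ν)}
    (hs : s ∈ ρ.2) : (s.1 ++ s.2).IsInfix (lpsSupport ρ) :=
  (List.infix_of_mem_flatten (List.mem_map_of_mem (f := fun s => s.1 ++ s.2) hs)).trans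
    (List.suffix_append ρ.1 _).isInfix

theorem finite_setOf_lps (E : Finset (ν × α × ν)) (N k : ℕ) :
    {ρ : LPS ν α | (∀ e ∈ lpsSupport ρ, e ∈ E) ∧ lpsLen ρ ≤ N ∧ numCycles ρ ≤ k}.Finite := by
  set A := {l : List (ν × α × ν) | l.length ≤ N ∧ ∀ e ∈ l, e ∈ (E : Set (ν × α × ν))}
  have hA : A.Finite := List.finite_setOf_length_le_forall_mem E.finite_toSet N
  have hsub : ∀ ρ : LPS ν α, (∀ e ∈ lpsSupport ρ, e ∈ E) → lpsLen ρ ≤ N →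
      ∀ l : List (ν × α × ν), l.Sublist (lpsSupport ρ) → l ∈ A :=
    fun ρ hE hN l hl => ⟨hl.length_le.trans hN, fun e he => hE e (hl.subset he)⟩
  refine (hA.prod (List.finite_setOf_length_le_forall_mem (hA.prod hA) k)).subset ?_
  rintro ρ ⟨hE, hN, hk⟩
  refine ⟨hsub ρ hE hN _ (List.prefix_append _ _).sublist, hk, fun s hs => ?_⟩
  have hinf := infix_lpsSupport_of_mem hs
  exact ⟨hsub ρ hE hN _ ((List.prefix_append _ _).isInfix.trans hinf).sublist,
    hsub ρ hE hN _ ((List.suffix_append _ _).isInfix.trans hinf).sublist⟩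

section

variable {E : Finset (ν × α × ν)} {p q : ν}

theorem isLPSFrom_consEdge {e : ν × α × ν} {ρ : LPS ν α} :
    IsLPSFrom E p q (consEdge e ρ) ↔ e ∈ E ∧ e.1 = p ∧ IsLPSFrom E e.2.2 q ρ := by
  simp only [IsLPSFrom, lpsSupport_consEdge, List.forall_mem_cons, IsPathFrom]
  exact ⟨fun ⟨⟨h₁, h₂⟩, ⟨h₃, h₄⟩, h₅⟩ => ⟨h₁, h₃, h₂, h₄, h₅⟩,
    fun ⟨h₁, h₃, h₂, h₄, h₅⟩ => ⟨⟨h₁, h₂⟩, ⟨h₃, h₄⟩, h₅⟩⟩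

theorem isLPSFrom_consCycle {γ : List (ν × α × ν)} {ρ : LPS ν α} :
    IsLPSFrom E p q (consCycle γ ρ) ↔
      (∀ x ∈ γ, x ∈ E) ∧ γ ≠ [] ∧ IsPathFrom p p γ ∧ IsLPSFrom E p q ρ := by
  unfold IsLPSFrom
  rw [lpsSupport_consCycle]
  dsimp only [consCycle]
  simp only [List.forall_mem_append, List.forall_mem_cons]
  constructor
  · rintro ⟨⟨hγE, hρE⟩, hpath, ⟨hγ, r, hr⟩, hcyc⟩
    obtain ⟨v, hpv, hvq⟩ := IsPathFrom.append_iff.1 hpath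
    obtain rfl := hpv.source_unique hr hγ
    obtain rfl := hpv.target_unique hr
    exact ⟨hγE, hγ, hpv, hρE, hvq, hcyc⟩
  · rintro ⟨hγE, hγ, hpp, hρE, hpq, hcyc⟩
    exact ⟨⟨hγE, hρE⟩, hpp.append hpq, ⟨hγ, p, hpp⟩, hcyc⟩

theorem IsLPSFrom.isPathFrom_lpsWord {ρ : LPS ν α} (h : IsLPSFrom E p q ρ) {es : List ℕ}
    (hes : es.length = numCycles ρ) :
    IsPathFrom p q (lpsWord ρ es) ∧ ∀ x ∈ lpsWord ρ es, x ∈ E := by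
  induction ρ using LPS.induction generalizing p es with
  | nil =>
    obtain rfl : es = [] := List.eq_nil_of_length_eq_zero hes
    exact ⟨h.2.1, by simp [lpsWord]⟩
  | consEdge e ρ ih =>
    obtain ⟨heE, rfl, hρ⟩ := isLPSFrom_consEdge.1 h
    obtain ⟨hpath, hE⟩ := ih hρ hes
    exact ⟨⟨rfl, hpath⟩, List.forall_mem_cons.2 ⟨heE, hE⟩⟩
  | consCycle γ ρ ih =>
    obtain ⟨hγE, -, hγ, hρ⟩ := isLPSFrom_consCycle.1 h
    obtain _ | ⟨n, es⟩ := es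
    · exact absurd hes (by simp)
    obtain ⟨hpath, hE⟩ := ih hρ (by simpa using hes)
    rw [lpsWord_consCycle]
    refine ⟨(hγ.replicate_flatten n).append hpath, ?_⟩
    simp only [List.forall_mem_append, List.mem_flatten, List.mem_replicate]
    exact ⟨fun x ⟨_, ⟨_, rfl⟩, hx⟩ => hγE x hx, hE⟩

end

section

variable [DecidableEq ν] [DecidableEq α]

theorem IsPathFrom.exists_skeleton {p q : ν} {π : List (ν × α × ν)} (U : Finset ν)
    (hU : ∀ e ∈ π, e.2.2 ∈ U) (h : IsPathFrom p q π) :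
    ∃ π₀, π₀.Sublist π ∧ IsPathFrom p q π₀ ∧ π ⊆ π₀ ∧
      π₀.length ≤ U.card * π.toFinset.card := by
  rcases eq_or_ne π [] with rfl | hne
  · exact ⟨[], List.Sublist.refl _, h, List.Subset.refl _, by simp⟩
  obtain ⟨π₁, e, R, rfl, he, hR⟩ := List.exists_eq_append_cons_notMem_subset hne
  obtain ⟨v, h₁, hev, hR'⟩ := IsPathFrom.append_iff.1 h
  obtain ⟨π₁₀, hsub₁, hπ₁₀, hcov₁, hlen₁⟩ :=
    IsPathFrom.exists_skeleton U (fun x hx => hU x (List.mem_append_left _ hx)) h₁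
  obtain ⟨R₀, hsubR, hR₀, hnd⟩ := hR'.exists_sublist_nodup_trace
  refine ⟨π₁₀ ++ e :: R₀, hsub₁.append (hsubR.cons_cons e), hπ₁₀.append ⟨hev, hR₀⟩, ?_, ?_⟩
  · intro x hx
    simp only [List.mem_append, List.mem_cons] at hx ⊢
    rcases hx with hx | rfl | hx
    · exact Or.inl (hcov₁ hx)
    · exact Or.inr (Or.inl rfl)
    · rcases List.mem_cons.1 (hR hx) with rfl | hx
      · exact Or.inr (Or.inl rfl)
      · exact Or.inl (hcov₁ hx)
  · have hblock : (e :: R₀).length ≤ U.card := by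
      refine (List.length_map (f := fun x : ν × α × ν => x.2.2)).symm.le.trans
        (hnd.length_le_card_of_forall_mem_s2 ?_)
      simp only [List.mem_cons, List.mem_map]
      rintro _ (rfl | ⟨x, hx, rfl⟩)
      · exact hU e (by simp)
      · exact hU x (List.mem_append_right _ (List.mem_cons_of_mem e (hsubR.subset hx)))
    have hsupp : (π₁ ++ e :: R).toFinset = insert e π₁.toFinset := by
      ext x
      simp only [List.mem_toFinset, List.mem_append, List.mem_cons, Finset.mem_insert]
      constructor
      · rintro (hx | rfl | hx)
        exacts [Or.inr hx, Or.inl rfl, List.mem_cons.1 (hR hx)]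
      · rintro (rfl | hx)
        exacts [Or.inr (Or.inl rfl), Or.inl hx]
    calc (π₁₀ ++ e :: R₀).length = π₁₀.length + (e :: R₀).length := List.length_append
      _ ≤ U.card * π₁.toFinset.card + U.card := add_le_add hlen₁ hblock
      _ = U.card * (π₁ ++ e :: R).toFinset.card := by
        rw [hsupp, Finset.card_insert_of_notMem (by simpa using he)]; ring
termination_by π.length
decreasing_by subst_vars; simp

theorem IsCirculation.sub {M N : Multiset (ν × α × ν)} (hM : IsCirculation M)
    (hN : IsCirculation N) (hNM : N ≤ M) : IsCirculation (M - N) := by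
  have h := hM
  rw [IsCirculation, ← tsub_add_cancel_of_le hNM, Multiset.map_add, Multiset.map_add, hN] at h
  exact add_right_cancel h

theorem isCirculation_sub_of_sublist {p q : ν} {π π₀ : List (ν × α × ν)} (hsub : π₀.Sublist π)
    (hπ : IsPathFrom p q π) (hπ₀ : IsPathFrom p q π₀) :
    IsCirculation ((π : Multiset (ν × α × ν)) - (π₀ : Multiset (ν × α × ν))) := by
  have hle : (π₀ : Multiset (ν × α × ν)) ≤ π := Multiset.coe_le.2 hsub.subperm
  have h := hπ.map_fst_add
  rw [← tsub_add_cancel_of_le hle, Multiset.map_add, Multiset.map_add, add_assoc, add_assoc,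
    hπ₀.map_fst_add] at h
  exact add_right_cancel h

theorem IsCirculation.exists_decomposition (U : Finset ν) {M : Multiset (ν × α × ν)}
    (hU : ∀ e ∈ M, e.1 ∈ U) (hM : IsCirculation M) :
    ∃ cs : Multiset (List (ν × α × ν) × ℕ),
      M = (cs.map fun c => c.2 • (c.1 : Multiset (ν × α × ν))).sum ∧
      Multiset.card cs ≤ M.toFinset.card ∧
      ∀ c ∈ cs, IsCycle c.1 ∧ c.1.length ≤ U.card ∧ ∀ e ∈ c.1, e ∈ M := by
  rcases eq_or_ne M 0 with rfl | hne
  · exact ⟨0, by simp, by simp, by simp⟩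
  obtain ⟨e, he⟩ := Multiset.exists_mem_of_ne_zero hne
  obtain ⟨c, hcyc, hcnd, hcM⟩ :=
    exists_isCycle_of_forall_exists_succ U (s := {e | e ∈ M}) hU (fun _ => hM.exists_succ) he
  obtain ⟨e₀, he₀, hmin⟩ := c.toFinset.exists_min_image M.count
    ⟨_, List.mem_toFinset.2 (List.getLast_mem hcyc.1)⟩
  rw [List.mem_toFinset] at he₀
  obtain ⟨r, hr⟩ := hcyc.2
  have hnd : (c : Multiset (ν × α × ν)).Nodup := Multiset.coe_nodup.2 (hcnd.of_map _)
  have hle : M.count e₀ • (c : Multiset (ν × α × ν)) ≤ M :=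
    Multiset.nsmul_le_of_nodup hnd fun x hx => hmin x (List.mem_toFinset.2 (Multiset.mem_coe.1 hx))
  set M' := M - M.count e₀ • (c : Multiset (ν × α × ν))
  have hM'M : M' ≤ M := tsub_le_self
  have hlt : M'.toFinset.card < M.toFinset.card := by
    refine Finset.card_lt_card ⟨Multiset.toFinset_subset.2 (Multiset.subset_of_le hM'M), ?_⟩
    intro hsub
    have he₀M' := Multiset.mem_toFinset.1 (hsub (Multiset.mem_toFinset.2 (hcM e₀ he₀)))
    rw [← Multiset.count_pos, Multiset.count_sub, Multiset.count_nsmul,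
      Multiset.count_eq_one_of_mem hnd (Multiset.mem_coe.2 he₀), mul_one, tsub_self] at he₀M'
    exact lt_irrefl 0 he₀M'
  obtain ⟨cs, hsum, hcard, hcs⟩ := exists_decomposition U
    (fun x hx => hU x (Multiset.mem_of_le hM'M hx)) (hM.sub (hr.isCirculation.nsmul _) hle)
  refine ⟨(c, M.count e₀) ::ₘ cs, ?_, ?_, ?_⟩
  · rw [Multiset.map_cons, Multiset.sum_cons, ← hsum, add_tsub_cancel_of_le hle]
  · rw [Multiset.card_cons]
    omega
  · rintro c' hc'
    rcases Multiset.mem_cons.1 hc' with rfl | hc'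
    · refine ⟨hcyc, ?_, hcM⟩
      rw [← List.length_map Prod.fst]
      refine hcnd.length_le_card_of_forall_mem_s2 ?_
      simp only [List.mem_map]
      rintro _ ⟨x, hx, rfl⟩
      exact hU x (hcM x hx)
    · obtain ⟨h₁, h₂, h₃⟩ := hcs c' hc'
      exact ⟨h₁, h₂, fun x hx => Multiset.mem_of_le hM'M (h₃ x hx)⟩
termination_by M.toFinset.card

theorem exists_isLPSFrom_of_isCycle (E : Finset (ν × α × ν)) {p q : ν} {π₀ : List (ν × α × ν)}
    (hπ₀ : IsPathFrom p q π₀) (hπ₀E : ∀ e ∈ π₀, e ∈ E) (cs : Multiset (List (ν × α × ν) × ℕ))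
    (hcs : ∀ c ∈ cs, IsCycle c.1 ∧ (∀ e ∈ c.1, e ∈ E) ∧ ∃ e ∈ c.1, e ∈ π₀) :
    ∃ ρ es, IsLPSFrom E p q ρ ∧ es.length = numCycles ρ ∧ numCycles ρ = Multiset.card cs ∧
      lpsLen ρ = π₀.length + (cs.map fun c => c.1.length).sum ∧
      (lpsWord ρ es : Multiset (ν × α × ν)) =
        π₀ + (cs.map fun c => c.2 • (c.1 : Multiset (ν × α × ν))).sum := by
  match π₀ with
  | [] =>
    obtain rfl : cs = 0 :=
      Multiset.eq_zero_of_forall_notMem fun c hc => by simpa using (hcs c hc).2.2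
    exact ⟨([], []), [], ⟨by simp [lpsSupport], hπ₀, by simp⟩, rfl, rfl, rfl, by simp [lpsWord]⟩
  | e :: π₀ =>
    by_cases hanchor : ∃ c ∈ cs, e ∈ c.1
    · obtain ⟨c, hc, hec⟩ := hanchor
      obtain ⟨⟨-, r, hr⟩, hcE, -⟩ := hcs c hc
      obtain ⟨γ, hγ, hperm⟩ := hr.exists_perm_cons_of_mem hec
      rw [hπ₀.1] at hγ
      obtain ⟨ρ, es, hρ, hes, hnum, hlen, hword⟩ := exists_isLPSFrom_of_isCycle E hπ₀ hπ₀E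
        (cs.erase c) fun c' hc' => hcs c' (Multiset.mem_of_mem_erase hc')
      refine ⟨consCycle (e :: γ) ρ, c.2 :: es,
        isLPSFrom_consCycle.2 ⟨fun x hx => hcE x (hperm.subset hx), List.cons_ne_nil _ _, hγ, hρ⟩,
        by simp [hes], by simp [hnum, Multiset.card_erase_add_one hc], ?_, ?_⟩
      · rw [lpsLen, lpsSupport_consCycle, List.length_append, ← lpsLen, hlen, hperm.length_eq,
          ← Multiset.sum_map_erase hc]
        ring
      · rw [lpsWord_consCycle, ← Multiset.coe_add, Multiset.coe_flatten_replicate, hword,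
          Multiset.coe_eq_coe.2 hperm, ← Multiset.sum_map_erase hc, add_left_comm]
    · push Not at hanchor
      obtain ⟨ρ, es, hρ, hes, hnum, hlen, hword⟩ := exists_isLPSFrom_of_isCycle E hπ₀.2
        (fun x hx => hπ₀E x (List.mem_cons_of_mem e hx)) cs fun c hc => by
          obtain ⟨hcyc, hcE, x, hx, hxπ₀⟩ := hcs c hc
          rcases List.mem_cons.1 hxπ₀ with rfl | hxπ₀
          · exact absurd hx (hanchor c hc)
          · exact ⟨hcyc, hcE, x, hx, hxπ₀⟩
      refine ⟨consEdge e ρ, es, isLPSFrom_consEdge.2 ⟨hπ₀E e List.mem_cons_self, hπ₀.1, hρ⟩,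
        hes, hnum, ?_, ?_⟩
      · rw [lpsLen, lpsSupport_consEdge, List.length_cons, ← lpsLen, hlen, List.length_cons]
        ring
      · rw [lpsWord_consEdge, ← Multiset.cons_coe, hword, ← Multiset.cons_coe, Multiset.cons_add]
termination_by π₀.length + Multiset.card cs
decreasing_by
  · have := Multiset.card_erase_lt_of_mem hc
    omega
  · simp

theorem exists_lps_parikh_eq (U : Finset ν) (E : Finset (ν × α × ν))
    (hE : ∀ e ∈ E, e.1 ∈ U ∧ e.2.2 ∈ U) {p q : ν} {π : List (ν × α × ν)}
    (hπE : ∀ e ∈ π, e ∈ E) (hπ : IsPathFrom p q π) :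
    ∃ ρ, ((∃ p q, IsLPSFrom E p q ρ) ∧ lpsLen ρ ≤ 2 * U.card * E.card ∧
      numCycles ρ ≤ E.card) ∧ ∃ π', InLang ρ π' ∧ parikh π = parikh π' := by
  obtain ⟨π₀, hsub, hπ₀, hcov, hlen₀⟩ := hπ.exists_skeleton U fun e he => (hE e (hπE e he)).2
  have hle : (π₀ : Multiset (ν × α × ν)) ≤ π := Multiset.coe_le.2 hsub.subperm
  set M := (π : Multiset (ν × α × ν)) - π₀
  have hMπ : ∀ e ∈ M, e ∈ π := fun e he => Multiset.mem_coe.1 (Multiset.mem_of_le tsub_le_self he)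
  obtain ⟨cs, hM, hcard, hcs⟩ := (isCirculation_sub_of_sublist hsub hπ hπ₀).exists_decomposition
    U fun e he => (hE e (hπE e (hMπ e he))).1
  obtain ⟨ρ, es, hρ, hes, hnum, hlen, hword⟩ := exists_isLPSFrom_of_isCycle E hπ₀
    (fun e he => hπE e (hsub.subset he)) cs fun c hc => by
      obtain ⟨hcyc, -, hcM⟩ := hcs c hc
      obtain ⟨e, he⟩ := List.exists_mem_of_ne_nil _ hcyc.1
      exact ⟨hcyc, fun x hx => hπE x (hMπ x (hcM x hx)), e, he, hcov (hMπ e (hcM e he))⟩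
  have hπcard : π.toFinset.card ≤ E.card :=
    Finset.card_le_card fun e he => hπE e (List.mem_toFinset.1 he)
  have hcscard : Multiset.card cs ≤ E.card := hcard.trans <|
    Finset.card_le_card fun e he => hπE e (hMπ e (Multiset.mem_toFinset.1 he))
  have hcslen : (cs.map fun c => c.1.length).sum ≤ Multiset.card cs * U.card := by
    have := Multiset.sum_le_card_nsmul (cs.map fun c => c.1.length) U.card fun n hn => by
      obtain ⟨c, hc, rfl⟩ := Multiset.mem_map.1 hn
      exact (hcs c hc).2.1
    simpa using this
  refine ⟨ρ, ⟨⟨p, q, hρ⟩, ?_, hnum ▸ hcscard⟩, lpsWord ρ es, ⟨es, hes, rfl⟩, ?_⟩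
  · calc lpsLen ρ ≤ U.card * π.toFinset.card + Multiset.card cs * U.card := by omega
      _ ≤ U.card * E.card + E.card * U.card := by gcongr
      _ = 2 * U.card * E.card := by ring
  · have hπ' : (lpsWord ρ es : Multiset (ν × α × ν)) = π := by
      rw [hword, ← hM, add_tsub_cancel_of_le hle]
    funext e
    exact ((Multiset.coe_eq_coe.1 hπ').count_eq e).symm

end

/-- Lemma on Parikh images. The Parikh images of paths of a
finite labeled graph `G = (U,E)` are exactly the Parikh images of words of a
finite set of linear path schemes of length at most `2·|U|·|E|` with at most
`|E|` cycles each. -/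
theorem statement2 {ν α : Type} [DecidableEq ν] [DecidableEq α]
    (U : Finset ν) (E : Finset (ν × α × ν))
    (hE : ∀ e ∈ E, e.1 ∈ U ∧ e.2.2 ∈ U) :
    ∃ S : Finset (LPS ν α),
      (∀ ρ ∈ S, ∃ p q, IsLPSFrom E p q ρ) ∧
      ({f : (ν × α × ν) → ℕ |
          ∃ π, (∀ e ∈ π, e ∈ E) ∧ (∃ p q, IsPathFrom p q π) ∧ f = parikh π} =
        ⋃ ρ ∈ S, {f | ∃ π, InLang ρ π ∧ f = parikh π}) ∧
      (∀ ρ ∈ S, lpsLen ρ ≤ 2 * U.card * E.card) ∧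
      (∀ ρ ∈ S, numCycles ρ ≤ E.card) := by
  have hS : {ρ : LPS ν α | (∃ p q, IsLPSFrom E p q ρ) ∧ lpsLen ρ ≤ 2 * U.card * E.card ∧
      numCycles ρ ≤ E.card}.Finite :=
    (finite_setOf_lps E _ _).subset fun ρ ⟨⟨_, _, hρ⟩, hN, hk⟩ => ⟨hρ.1, hN, hk⟩
  refine ⟨hS.toFinset, fun ρ hρ => (hS.mem_toFinset.1 hρ).1, ?_,
    fun ρ hρ => (hS.mem_toFinset.1 hρ).2.1, fun ρ hρ => (hS.mem_toFinset.1 hρ).2.2⟩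
  ext f
  simp only [Set.mem_ofPred_eq, Set.mem_iUnion, Set.Finite.mem_toFinset, exists_prop]
  constructor
  · rintro ⟨π, hπE, ⟨p, q, hπ⟩, rfl⟩
    exact exists_lps_parikh_eq U E hE hπE hπ
  · rintro ⟨ρ, ⟨⟨p, q, hρ⟩, -⟩, π, ⟨es, hes, rfl⟩, rfl⟩
    obtain ⟨hpath, hπE⟩ := hρ.isPathFrom_lpsWord hes
    exact ⟨_, hπE, ⟨p, q, hpath⟩, rfl⟩

end LabeledGraph
end

section
/- Let B ∈ ℕ with B ≥ 1, and let p₂, p₃ ∈ ℤ² be linearly independent vectors (i.e., p₂ and p₃ are not rational multiples of each other) with ‖p₂‖, ‖p₃‖ ≤ B. Then for every p₁ ∈ ℤ² with ‖p₁‖ ≤ B there exist integers γ₁ ∈ [1, 2B²] and γ₂, γ₃ ∈ [−2B², 2B²] such that γ₁·p₁ = γ₂·p₂ + γ₃·p₃. -/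
namespace LinSets

/-- Integer vectors of dimension 2. -/
abbrev Vec2 := Fin 2 → ℤ

/-- The norm of a vector: maximum of absolute values of its components. -/
def vnorm (z : Vec2) : ℕ := Finset.univ.sup fun i => (z i).natAbs

lemma abs_le_of_vnorm {z : Vec2} {B : ℕ} (h : vnorm z ≤ B) (i : Fin 2) :
    |z i| ≤ (B : ℤ) := by
  have : (z i).natAbs ≤ B :=
    le_trans (Finset.le_sup (f := fun j => (z j).natAbs) (Finset.mem_univ i)) h
  rw [Int.abs_eq_natAbs]
  exact_mod_cast this

lemma det_bound {a b c d B : ℤ} (ha : |a| ≤ B) (hb : |b| ≤ B) (hc : |c| ≤ B)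
    (hd : |d| ≤ B) : |a * b - c * d| ≤ 2 * B ^ 2 := by
  have h1 : |a * b - c * d| ≤ |a * b| + |c * d| := abs_sub _ _
  have h2 : |a * b| = |a| * |b| := abs_mul a b
  have h3 : |c * d| = |c| * |d| := abs_mul c d
  have ha0 : 0 ≤ |a| := abs_nonneg a
  have hb0 : 0 ≤ |b| := abs_nonneg b
  have hc0 : 0 ≤ |c| := abs_nonneg c
  have hd0 : 0 ≤ |d| := abs_nonneg d
  nlinarith [h1]

/-- If `p₂, p₃ ∈ ℤ²` are linearly independent of norm at most
`B ≥ 1`, then every `p₁ ∈ ℤ²` of norm at most `B` satisfies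
`γ₁·p₁ = γ₂·p₂ + γ₃·p₃` for some `γ₁ ∈ [1, 2B²]` and `γ₂, γ₃ ∈ [−2B², 2B²]`. -/
theorem statement6 (B : ℕ) (hB : 1 ≤ B) (p₂ p₃ : Vec2)
    (hind : ∀ a b : ℤ, a • p₂ + b • p₃ = 0 → a = 0 ∧ b = 0)
    (h₂ : vnorm p₂ ≤ B) (h₃ : vnorm p₃ ≤ B) :
    ∀ p₁ : Vec2, vnorm p₁ ≤ B →
      ∃ γ₁ γ₂ γ₃ : ℤ,
        1 ≤ γ₁ ∧ γ₁ ≤ 2 * (B : ℤ) ^ 2 ∧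
        -(2 * (B : ℤ) ^ 2) ≤ γ₂ ∧ γ₂ ≤ 2 * (B : ℤ) ^ 2 ∧
        -(2 * (B : ℤ) ^ 2) ≤ γ₃ ∧ γ₃ ≤ 2 * (B : ℤ) ^ 2 ∧
        γ₁ • p₁ = γ₂ • p₂ + γ₃ • p₃ := by
  intro p₁ h₁
  set d : ℤ := p₂ 0 * p₃ 1 - p₂ 1 * p₃ 0 with hd
  have hdne : d ≠ 0 := by
    intro h0
    have e1 : (p₃ 1) • p₂ + (-(p₂ 1)) • p₃ = 0 := by
      funext i
      fin_cases i <;> simp [Pi.add_apply, Pi.smul_apply] <;> linarith [h0]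
    have e2 : (p₃ 0) • p₂ + (-(p₂ 0)) • p₃ = 0 := by
      funext i
      fin_cases i <;> simp [Pi.add_apply, Pi.smul_apply] <;> linarith [h0]
    obtain ⟨h31, h21⟩ := hind _ _ e1
    obtain ⟨h30, h20⟩ := hind _ _ e2
    have hp2 : p₂ = 0 := by
      funext i
      fin_cases i
      · simpa using neg_eq_zero.mp h20
      · simpa using neg_eq_zero.mp h21
    have := hind 1 0 (by simp [hp2])
    exact one_ne_zero this.1
  -- Cramer's rule quantities
  set a₂ : ℤ := p₁ 0 * p₃ 1 - p₁ 1 * p₃ 0 with ha₂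
  set a₃ : ℤ := p₂ 0 * p₁ 1 - p₂ 1 * p₁ 0 with ha₃
  have key : d • p₁ = a₂ • p₂ + a₃ • p₃ := by
    funext i
    fin_cases i <;> simp [Pi.add_apply, Pi.smul_apply, hd, ha₂, ha₃] <;> ring
  have hBpos : (0:ℤ) < (B:ℤ) := by exact_mod_cast hB
  have b20 := abs_le_of_vnorm h₂ 0
  have b21 := abs_le_of_vnorm h₂ 1
  have b30 := abs_le_of_vnorm h₃ 0
  have b31 := abs_le_of_vnorm h₃ 1
  have b10 := abs_le_of_vnorm h₁ 0
  have b11 := abs_le_of_vnorm h₁ 1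
  have hdb : |d| ≤ 2 * (B:ℤ) ^ 2 := det_bound b20 b31 b21 b30
  have ha₂b : |a₂| ≤ 2 * (B:ℤ) ^ 2 := det_bound b10 b31 b11 b30
  have ha₃b : |a₃| ≤ 2 * (B:ℤ) ^ 2 := det_bound b20 b11 b21 b10
  rcases lt_or_gt_of_ne hdne with hneg | hpos
  · refine ⟨-d, -a₂, -a₃, by omega, ?_, ?_, ?_, ?_, ?_, ?_⟩
    · rw [abs_of_neg hneg] at hdb; linarith
    · have := abs_le.mp ha₂b; omega
    · have := abs_le.mp ha₂b; omega
    · have := abs_le.mp ha₃b; omega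
    · have := abs_le.mp ha₃b; omega
    · funext i
      have := congrFun key i
      simp [Pi.add_apply, Pi.smul_apply] at this ⊢
      linarith
  · refine ⟨d, a₂, a₃, by omega, ?_, ?_, ?_, ?_, ?_, key⟩
    · rw [abs_of_pos hpos] at hdb; exact hdb
    · have := abs_le.mp ha₂b; omega
    · have := abs_le.mp ha₂b; omega
    · have := abs_le.mp ha₃b; omega
    · have := abs_le.mp ha₃b; omega

end LinSets
end

section
/- There exists a constant c ∈ ℕ such that for every 1-VASS V = (Q,T) with unary updates (i.e., T ⊆ Q×{−1,0,1}×Q) and all states p,q ∈ Q and all u,v ∈ ℕ: if p(u) →*_ℕ q(v), then, setting D = |v − u|, there exists a word π ∈ T* with p(u) →^π_ℕ q(v) and |π| ≤ (|Q| + 1)^c + |Q|·D. -/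
namespace VASS

/-- A transition of a 1-VASS: source state, integer update, target state. -/
abbrev Trans1 := ℕ × ℤ × ℕ

/-- The norm of a transition set of a 1-VASS. -/
def tnorm1 (T : Finset Trans1) : ℕ := T.sup fun t => t.2.1.natAbs

/-- The displacement of a word of transitions. -/
def disp1 (π : List Trans1) : ℤ := (π.map fun t => t.2.1).sum

/-- `IsPathFrom1 p q π` : `π` is a path from `p` to `q`. -/
def IsPathFrom1 : ℕ → ℕ → List Trans1 → Prop
  | p, q, [] => p = q
  | p, q, t :: rest => t.1 = p ∧ IsPathFrom1 t.2.2 q rest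

/-- ℕ as a subset of ℤ. -/
def NNeg : Set ℤ := {z | 0 ≤ z}

/-- `p(u) →^π_A q(v)` for a 1-VASS. -/
def Run1 (T : Finset Trans1) (A : Set ℤ) (p : ℕ) (u : ℤ) (q : ℕ) (v : ℤ)
    (π : List Trans1) : Prop :=
  (∀ t ∈ π, t ∈ T) ∧ IsPathFrom1 p q π ∧ u ∈ A ∧ v = u + disp1 π ∧
    ∀ i, 1 ≤ i → i ≤ π.length → u + disp1 (π.take i) ∈ A

/-- `p(u) →*_A q(v)` for a 1-VASS. -/
def Reach1 (T : Finset Trans1) (A : Set ℤ) (p : ℕ) (u : ℤ) (q : ℕ) (v : ℤ) : Prop :=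
  ∃ π, Run1 T A p u q v π

/-- A linear path scheme of a 1-VASS, presented as the initial segment `α₀`
together with the list of pairs `(βᵢ, αᵢ)`. -/
abbrev LPS1 := List Trans1 × List (List Trans1 × List Trans1)

/-- The underlying word `α₀ β₁ α₁ ⋯ β_k α_k` of a linear path scheme. -/
def lpsSupport1 (ρ : LPS1) : List Trans1 :=
  ρ.1 ++ (ρ.2.map fun s => s.1 ++ s.2).flatten

/-- The length of a linear path scheme. -/
def lpsLen1 (ρ : LPS1) : ℕ := (lpsSupport1 ρ).length

/-- The number of cycles of a linear path scheme. -/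
def numCycles1 (ρ : LPS1) : ℕ := ρ.2.length

/-- `ρ` is a linear path scheme from `p` to `q` over the transition set `T`. -/
def IsLPSFrom1 (T : Finset Trans1) (p q : ℕ) (ρ : LPS1) : Prop :=
  (∀ t ∈ lpsSupport1 ρ, t ∈ T) ∧ IsPathFrom1 p q (lpsSupport1 ρ) ∧
    ∀ s ∈ ρ.2, s.1 ≠ [] ∧ ∃ r, IsPathFrom1 r r s.1

/-- The word `α₀ β₁^{e₁} α₁ ⋯ β_k^{e_k} α_k` of a linear path scheme. -/
def lpsWord1 (ρ : LPS1) (e : List ℕ) : List Trans1 :=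
  ρ.1 ++ (List.zipWith (fun s n => (List.replicate n s.1).flatten ++ s.2) ρ.2 e).flatten

/-- Membership in the language of a linear path scheme. -/
def InLang1 (ρ : LPS1) (π : List Trans1) : Prop :=
  ∃ e : List ℕ, e.length = numCycles1 ρ ∧ π = lpsWord1 ρ e

/-- `p(u) →^Y_A q(v)` for a finite set `Y` of linear path schemes. -/
def SReach1 (T : Finset Trans1) (Y : Finset LPS1) (A : Set ℤ)
    (p : ℕ) (u : ℤ) (q : ℕ) (v : ℤ) : Prop :=
  ∃ ρ ∈ Y, ∃ π, InLang1 ρ π ∧ Run1 T A p u q v π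

/-!
Take a shortest run. If its counter rose more than `|Q|²` above `max u v`, then among the
`|Q|² + 1` levels just above `max u v` two would have the same pair of states at their last
upward and their first downward crossing; cutting out the two cycles between these crossings,
which have opposite effects and enclose only larger values, leaves a shorter run. Symmetrically,
the counter never drops more than `|Q|²` below `min u v` (there the cut lifts the middle part).
A shortest run repeats no configuration, so its length is below
`|Q| · (|v - u| + 2|Q|² + 1) ≤ (|Q| + 1)⁴ + |Q| · |v - u|`.
-/

@[simp] lemma disp1_nil : disp1 [] = 0 := rfl

@[simp] lemma disp1_append (xs ys : List Trans1) : disp1 (xs ++ ys) = disp1 xs + disp1 ys := by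
  simp [disp1]

def endState (p : ℕ) (π : List Trans1) : ℕ := π.foldl (fun _ t => t.2.2) p

lemma endState_append (p : ℕ) (xs ys : List Trans1) :
    endState p (xs ++ ys) = endState (endState p xs) ys :=
  List.foldl_append

lemma IsPathFrom1.eq_endState {p q : ℕ} {π : List Trans1} (h : IsPathFrom1 p q π) :
    q = endState p π := by
  induction π generalizing p with
  | nil => exact h.symm
  | cons t π ih => exact ih h.2

lemma isPathFrom1_append_iff {p q : ℕ} {xs ys : List Trans1} :
    IsPathFrom1 p q (xs ++ ys) ↔
      IsPathFrom1 p (endState p xs) xs ∧ IsPathFrom1 (endState p xs) q ys := by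
  induction xs generalizing p with
  | nil => simp [IsPathFrom1, endState]
  | cons t xs ih =>
    simp only [List.cons_append, IsPathFrom1, endState, List.foldl_cons] at ih ⊢
    rw [ih]
    tauto

def stateAt (p : ℕ) (π : List Trans1) (k : ℕ) : ℕ := endState p (π.take k)

def counterAt (u : ℤ) (π : List Trans1) (k : ℕ) : ℤ := u + disp1 (π.take k)

@[simp] lemma counterAt_zero (u : ℤ) (π : List Trans1) : counterAt u π 0 = u := by
  simp [counterAt]

lemma counterAt_of_length_le {u : ℤ} {π : List Trans1} {k : ℕ} (h : π.length ≤ k) :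
    counterAt u π k = u + disp1 π := by
  rw [counterAt, List.take_of_length_le h]

lemma counterAt_add_const (u c : ℤ) (π : List Trans1) (k : ℕ) :
    counterAt (u + c) π k = counterAt u π k + c := by
  simp only [counterAt]; ring

lemma counterAt_append (u : ℤ) (xs ys : List Trans1) (k : ℕ) :
    counterAt u (xs ++ ys) k = counterAt (counterAt u xs k) ys (k - xs.length) := by
  simp only [counterAt, List.take_append, disp1_append, add_assoc]

lemma counterAt_add (u : ℤ) (π : List Trans1) (i k : ℕ) :
    counterAt u π (i + k) = counterAt (counterAt u π i) (π.drop i) k := by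
  simp only [counterAt, List.take_add, disp1_append, add_assoc]

lemma counterAt_take (u : ℤ) (π : List Trans1) (m k : ℕ) :
    counterAt u (π.take m) k = counterAt u π (min k m) := by
  rw [counterAt, List.take_take, counterAt]

lemma stateAt_add (p : ℕ) (π : List Trans1) (i k : ℕ) :
    stateAt p π (i + k) = stateAt (stateAt p π i) (π.drop i) k := by
  simp only [stateAt, List.take_add, endState_append]

lemma stateAt_mem {Q : Finset ℕ} {p : ℕ} {π : List Trans1} (hπ : ∀ t ∈ π, t.2.2 ∈ Q)
    (hp : p ∈ Q) (k : ℕ) : stateAt p π k ∈ Q := by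
  suffices ∀ l : List Trans1, (∀ t ∈ l, t.2.2 ∈ Q) → ∀ r ∈ Q, endState r l ∈ Q from
    this _ (fun t ht => hπ t (List.mem_of_mem_take ht)) p hp
  intro l
  induction l with
  | nil => exact fun _ r hr => hr
  | cons t l ih =>
    exact fun hl _ _ =>
      ih (fun x hx => hl x (List.mem_cons_of_mem _ hx)) _ (hl t List.mem_cons_self)

lemma abs_counterAt_succ_sub_le {T : Finset Trans1} {π : List Trans1} (hπ : ∀ t ∈ π, t ∈ T)
    (u : ℤ) (k : ℕ) : |counterAt u π (k + 1) - counterAt u π k| ≤ tnorm1 T := by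
  rcases lt_or_ge k π.length with hk | hk
  · have hstep : counterAt u π (k + 1) - counterAt u π k = π[k].2.1 := by
      rw [counterAt, counterAt, List.take_add_one, List.getElem?_eq_getElem hk, Option.toList_some,
        disp1_append]
      simp [disp1]
    rw [hstep, Int.abs_eq_natAbs, Nat.cast_le]
    exact Finset.le_sup (f := fun t : Trans1 => t.2.1.natAbs) (hπ _ (List.getElem_mem hk))
  · rw [counterAt_of_length_le hk, counterAt_of_length_le (by omega)]
    simp

lemma tnorm1_le_one {T : Finset Trans1} (hT : ∀ t ∈ T, t.2.1 = -1 ∨ t.2.1 = 0 ∨ t.2.1 = 1) :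
    tnorm1 T ≤ 1 :=
  Finset.sup_le fun t ht => by rcases hT t ht with h | h | h <;> simp [h]

lemma mem_NNeg {z : ℤ} : z ∈ NNeg ↔ 0 ≤ z := Iff.rfl

section Runs

variable {T : Finset Trans1} {A B : Set ℤ} {p q r : ℕ} {u v w : ℤ} {π xs ys : List Trans1}

lemma run1_iff : Run1 T A p u q v π ↔
    (∀ t ∈ π, t ∈ T) ∧ IsPathFrom1 p q π ∧ v = u + disp1 π ∧ ∀ k, counterAt u π k ∈ A := by
  refine ⟨fun ⟨hT, hpath, hu, hv, hA⟩ => ⟨hT, hpath, hv, fun k => ?_⟩,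
    fun ⟨hT, hpath, hv, hA⟩ => ⟨hT, hpath, by simpa using hA 0, hv, fun k _ _ => hA k⟩⟩
  rw [← List.take_of_length_le (le_refl π.length), counterAt_take]
  rcases Nat.eq_zero_or_pos (min k π.length) with h0 | hpos
  · rw [h0, counterAt_zero]
    exact hu
  · exact hA _ hpos (min_le_right _ _)

lemma Run1.counterAt_mem (h : Run1 T A p u q v π) (k : ℕ) : counterAt u π k ∈ A :=
  (run1_iff.mp h).2.2.2 k

lemma Run1.append (h₁ : Run1 T A p u r w xs) (h₂ : Run1 T A r w q v ys) :
    Run1 T A p u q v (xs ++ ys) := by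
  obtain ⟨hT₁, hpath₁, hw, hA₁⟩ := run1_iff.mp h₁
  obtain ⟨hT₂, hpath₂, hv, hA₂⟩ := run1_iff.mp h₂
  have hr := hpath₁.eq_endState
  subst hr hw hv
  refine run1_iff.mpr ⟨fun t ht => ?_, isPathFrom1_append_iff.mpr ⟨hpath₁, hpath₂⟩,
    by rw [disp1_append, add_assoc], fun k => ?_⟩
  · rcases List.mem_append.mp ht with ht | ht
    exacts [hT₁ t ht, hT₂ t ht]
  · rw [counterAt_append]
    rcases le_or_gt k xs.length with hk | hk
    · rw [Nat.sub_eq_zero_of_le hk, counterAt_zero]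
      exact hA₁ k
    · rw [counterAt_of_length_le hk.le]
      exact hA₂ _

lemma Run1.take (h : Run1 T A p u q v π) (k : ℕ) :
    Run1 T A p u (stateAt p π k) (counterAt u π k) (π.take k) := by
  obtain ⟨hT, hpath, -, hA⟩ := run1_iff.mp h
  rw [← List.take_append_drop k π, isPathFrom1_append_iff] at hpath
  exact run1_iff.mpr ⟨fun t ht => hT t (List.mem_of_mem_take ht), hpath.1, rfl,
    fun j => by rw [counterAt_take]; exact hA _⟩

lemma Run1.drop (h : Run1 T A p u q v π) (k : ℕ) :
    Run1 T A (stateAt p π k) (counterAt u π k) q v (π.drop k) := by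
  obtain ⟨hT, hpath, hv, hA⟩ := run1_iff.mp h
  rw [← List.take_append_drop k π] at hpath hv
  rw [isPathFrom1_append_iff] at hpath
  refine run1_iff.mpr ⟨fun t ht => hT t (List.mem_of_mem_drop ht), hpath.2, ?_,
    fun j => by rw [← counterAt_add]; exact hA _⟩
  rw [hv, disp1_append, counterAt, add_assoc]

lemma Run1.segment (h : Run1 T A p u q v π) {i j : ℕ} (hij : i ≤ j) :
    Run1 T A (stateAt p π i) (counterAt u π i) (stateAt p π j) (counterAt u π j)
      ((π.drop i).take (j - i)) := by
  have hj : i + (j - i) = j := by omega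
  simpa only [← stateAt_add, ← counterAt_add, hj] using (h.drop i).take (j - i)

lemma Run1.add_const (h : Run1 T A p u q v π) (c : ℤ) (hB : ∀ k, counterAt u π k + c ∈ B) :
    Run1 T B p (u + c) q (v + c) π := by
  obtain ⟨hT, hpath, hv, -⟩ := run1_iff.mp h
  exact run1_iff.mpr ⟨hT, hpath, by rw [hv]; ring,
    fun k => by rw [counterAt_add_const]; exact hB k⟩

end Runs

section UnitSteps

variable {f : ℕ → ℤ} {ℓ : ℤ} {a b : ℕ}

lemma exists_last_eq_of_le (hf : ∀ t, f (t + 1) ≤ f t + 1) (hab : a ≤ b) (ha : f a ≤ ℓ)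
    (hb : ℓ ≤ f b) : ∃ t, a ≤ t ∧ t ≤ b ∧ f t = ℓ ∧ ∀ t', t ≤ t' → t' ≤ b → ℓ ≤ f t' := by
  induction b with
  | zero => exact ⟨0, hab, le_rfl, le_antisymm (by rwa [Nat.le_zero.mp hab] at ha) hb,
      fun t' h1 h2 => by rwa [Nat.le_zero.mp h2]⟩
  | succ b ih =>
    rcases eq_or_lt_of_le hb with hb | hb
    · exact ⟨b + 1, hab, le_rfl, hb.symm, fun t' h1 h2 => le_antisymm h2 h1 ▸ hb.le⟩
    rcases eq_or_lt_of_le hab with rfl | hab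
    · exact absurd (ha.trans_lt hb) (lt_irrefl _)
    obtain ⟨t, hat, htb, hft, hge⟩ := ih (Nat.le_of_lt_succ hab) (by linarith [hf b])
    refine ⟨t, hat, htb.trans b.le_succ, hft, fun t' h1 h2 => ?_⟩
    rcases eq_or_lt_of_le h2 with rfl | h2
    exacts [hb.le, hge t' h1 (Nat.le_of_lt_succ h2)]

lemma exists_first_eq_of_le (hf : ∀ t, f t ≤ f (t + 1) + 1) (hab : a ≤ b) (ha : ℓ ≤ f a)
    (hb : f b ≤ ℓ) : ∃ t, a ≤ t ∧ t ≤ b ∧ f t = ℓ ∧ ∀ t', a ≤ t' → t' ≤ t → ℓ ≤ f t' := by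
  obtain ⟨n, rfl⟩ := Nat.exists_eq_add_of_le hab
  induction n generalizing a with
  | zero => exact ⟨a, le_rfl, hab, le_antisymm hb ha, fun t' h1 h2 => by rwa [le_antisymm h2 h1]⟩
  | succ n ih =>
    rcases eq_or_lt_of_le ha with ha | ha
    · exact ⟨a, le_rfl, hab, ha.symm, fun t' h1 h2 => le_antisymm h2 h1 ▸ ha.le⟩
    obtain ⟨t, hat, htb, hft, hge⟩ :=
      ih (a := a + 1) (by linarith [hf a]) (by omega) (by rwa [Nat.add_right_comm])
    refine ⟨t, by omega, by omega, hft, fun t' h1 h2 => ?_⟩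
    rcases eq_or_lt_of_le h1 with rfl | h1
    exacts [ha.le, hge t' h1 h2]

lemma exists_level_interval (hf : ∀ t, |f (t + 1) - f t| ≤ 1) {P L : ℕ} (hPL : P ≤ L)
    (h0 : f 0 ≤ ℓ) (hL : f L ≤ ℓ) (hP : ℓ ≤ f P) :
    ∃ i j, i ≤ P ∧ P ≤ j ∧ j ≤ L ∧ f i = ℓ ∧ f j = ℓ ∧ ∀ t, i ≤ t → t ≤ j → ℓ ≤ f t := by
  have hup t : f (t + 1) ≤ f t + 1 := by linarith [(abs_le.mp (hf t)).2]
  have hdown t : f t ≤ f (t + 1) + 1 := by linarith [(abs_le.mp (hf t)).1]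
  obtain ⟨i, -, hiP, hfi, hgei⟩ := exists_last_eq_of_le hup P.zero_le h0 hP
  obtain ⟨j, hPj, hjL, hfj, hgej⟩ := exists_first_eq_of_le hdown hPL hP hL
  refine ⟨i, j, hiP, hPj, hjL, hfi, hfj, fun t h1 h2 => ?_⟩
  rcases le_total t P with h | h
  exacts [hgei t h1 h, hgej t h h2]

lemma exists_nested_cycles {α : Type*} (S : Finset α) (s : ℕ → α) (hs : ∀ t, s t ∈ S)
    (hf : ∀ t, |f (t + 1) - f t| ≤ 1) {P L : ℕ} {M : ℤ} (hPL : P ≤ L) (h0 : f 0 ≤ M)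
    (hL : f L ≤ M) (hP : M + S.card ^ 2 < f P) :
    ∃ i₁ i₂ j₂ j₁, i₁ < i₂ ∧ i₂ ≤ j₂ ∧ j₂ < j₁ ∧ j₁ ≤ L ∧ s i₁ = s i₂ ∧ s j₂ = s j₁ ∧
      f i₁ < f i₂ ∧ f i₁ = f j₁ ∧ f i₂ = f j₂ ∧ ∀ t, i₂ ≤ t → t ≤ j₂ → f i₂ ≤ f t := by
  have hlevel (ℓ : ℤ) : ∃ i j : ℕ, M < ℓ → ℓ ≤ f P → i ≤ P ∧ P ≤ j ∧ j ≤ L ∧ f i = ℓ ∧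
      f j = ℓ ∧ ∀ t, i ≤ t → t ≤ j → ℓ ≤ f t := by
    by_cases hℓ : M < ℓ ∧ ℓ ≤ f P
    · obtain ⟨i, j, hij⟩ := exists_level_interval hf hPL (by linarith) (by linarith) hℓ.2
      exact ⟨i, j, fun _ _ => hij⟩
    · exact ⟨0, 0, fun h1 h2 => absurd ⟨h1, h2⟩ hℓ⟩
  choose I J hIJ using hlevel
  have hcard : (S ×ˢ S).card < (Finset.Ioc M (M + S.card ^ 2 + 1)).card := by
    rw [Finset.card_product, Int.card_Ioc, ← sq,
      show M + S.card ^ 2 + 1 - M = ((S.card ^ 2 + 1 : ℕ) : ℤ) by push_cast; ring,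
      Int.toNat_natCast]
    exact Nat.lt_succ_self _
  obtain ⟨a, ha, b, hb, hne, hab⟩ := Finset.exists_ne_map_eq_of_card_lt_of_maps_to hcard
    (f := fun ℓ => (s (I ℓ), s (J ℓ))) fun ℓ _ => Finset.mk_mem_product (hs _) (hs _)
  simp only [Finset.mem_Ioc, Prod.mk.injEq] at ha hb hab
  wlog hlt : a < b generalizing a b
  · exact this b a hne.symm hb ha ⟨hab.1.symm, hab.2.symm⟩ (lt_of_le_of_ne (not_lt.mp hlt) hne.symm)
  obtain ⟨hIa, hJa, hJaL, hfIa, hfJa, -⟩ := hIJ a ha.1 (by linarith)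
  obtain ⟨hIb, hJb, -, hfIb, hfJb, hgeb⟩ := hIJ b hb.1 (by linarith)
  have hI : I a < I b := lt_of_not_ge fun h => by linarith [hgeb (I a) h (hIa.trans hJb)]
  have hJ : J b < J a := lt_of_not_ge fun h => by linarith [hgeb (J a) (hIb.trans hJa) h]
  refine ⟨I a, I b, J b, J a, hI, hIb.trans hJb, hJ, hJaL, hab.1, hab.2.symm, ?_, ?_, ?_, ?_⟩
  · rw [hfIa, hfIb]; exact hlt
  · rw [hfIa, hfJa]
  · rw [hfIb, hfJb]
  · rw [hfIb]; exact hgeb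

end UnitSteps

section ShortestRuns

variable {Q : Finset ℕ} {T : Finset Trans1} {A : Set ℤ} {p q : ℕ} {u v : ℤ} {π : List Trans1}

lemma Run1.counterAt_of_length_le (h : Run1 T A p u q v π) {k : ℕ} (hk : π.length ≤ k) :
    counterAt u π k = v := by
  rw [VASS.counterAt_of_length_le hk, (run1_iff.mp h).2.2.1]

lemma Run1.counterAt_nonneg (h : Run1 T NNeg p u q v π) (k : ℕ) : 0 ≤ counterAt u π k :=
  h.counterAt_mem k

lemma Run1.stateAt_mem (h : Run1 T A p u q v π) (hQ : ∀ t ∈ T, t.2.2 ∈ Q) (hp : p ∈ Q)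
    (k : ℕ) : stateAt p π k ∈ Q :=
  VASS.stateAt_mem (fun x hx => hQ x (h.1 x hx)) hp k

lemma Run1.abs_counterAt_succ_sub_le (h : Run1 T A p u q v π) (hT : tnorm1 T ≤ 1) (k : ℕ) :
    |counterAt u π (k + 1) - counterAt u π k| ≤ 1 :=
  (VASS.abs_counterAt_succ_sub_le h.1 u k).trans (by exact_mod_cast hT)

/-- The shorter run skips both cycles; its middle part is the old one with the counter shifted
by minus the effect of the first cycle. -/
lemma Run1.exists_shorter_of_cycles (h : Run1 T NNeg p u q v π) {i₁ i₂ j₂ j₁ : ℕ}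
    (h12 : i₁ < i₂) (h23 : i₂ ≤ j₂) (h34 : j₂ ≤ j₁) (h4 : j₁ ≤ π.length)
    (hs₁ : stateAt p π i₁ = stateAt p π i₂) (hs₂ : stateAt p π j₂ = stateAt p π j₁)
    (hc : counterAt u π i₂ - counterAt u π i₁ = counterAt u π j₂ - counterAt u π j₁)
    (hmid : ∀ t, i₂ ≤ t → t ≤ j₂ → counterAt u π i₂ - counterAt u π i₁ ≤ counterAt u π t) :
    ∃ π', Run1 T NNeg p u q v π' ∧ π'.length < π.length := by
  set d := counterAt u π i₂ - counterAt u π i₁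
  have hmiddle := (h.segment h23).add_const (B := NNeg) (-d) fun k => by
    rw [counterAt_take, ← counterAt_add]
    have := hmid (i₂ + min k (j₂ - i₂)) (by omega) (by omega)
    rw [mem_NNeg]
    linarith
  rw [show counterAt u π i₂ + -d = counterAt u π i₁ by ring,
    show counterAt u π j₂ + -d = counterAt u π j₁ by linarith, ← hs₁, hs₂] at hmiddle
  refine ⟨π.take i₁ ++ ((π.drop i₂).take (j₂ - i₂) ++ π.drop j₁),
    (h.take i₁).append (hmiddle.append (h.drop j₁)), ?_⟩
  simp only [List.length_append, List.length_take, List.length_drop]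
  omega

def IsShortestRun1 (T : Finset Trans1) (A : Set ℤ) (p : ℕ) (u : ℤ) (q : ℕ) (v : ℤ)
    (π : List Trans1) : Prop :=
  Run1 T A p u q v π ∧ ∀ π', Run1 T A p u q v π' → π.length ≤ π'.length

lemma Reach1.exists_isShortestRun1 (h : Reach1 T A p u q v) :
    ∃ π, IsShortestRun1 T A p u q v π :=
  ⟨_, Function.argminOn_mem List.length {π | Run1 T A p u q v π} h,
    fun _ h' => Function.argminOn_le List.length {π | Run1 T A p u q v π} h'⟩

lemma IsShortestRun1.counterAt_le (h : IsShortestRun1 T NNeg p u q v π)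
    (hQ : ∀ t ∈ T, t.2.2 ∈ Q) (hT : tnorm1 T ≤ 1) (hp : p ∈ Q) (t : ℕ) :
    counterAt u π t ≤ max u v + Q.card ^ 2 := by
  by_contra! ht
  have htL : t ≤ π.length := by
    by_contra! htL
    rw [h.1.counterAt_of_length_le htL.le] at ht
    linarith [le_max_right u v, sq_nonneg (Q.card : ℤ)]
  obtain ⟨i₁, i₂, j₂, j₁, h12, h23, h34, h4, hs₁, hs₂, -, he₁, he₂, hmid⟩ :=
    exists_nested_cycles Q (stateAt p π) (h.1.stateAt_mem hQ hp)
      (h.1.abs_counterAt_succ_sub_le hT) htL (by simp)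
      (by rw [h.1.counterAt_of_length_le le_rfl]; simp) ht
  obtain ⟨π', h', hlt⟩ := h.1.exists_shorter_of_cycles h12 h23 h34.le h4 hs₁ hs₂
    (by rw [he₁, he₂]) fun t' h1 h2 => by linarith [hmid t' h1 h2, h.1.counterAt_nonneg i₁]
  exact (h.2 π' h').not_gt hlt

lemma IsShortestRun1.le_counterAt (h : IsShortestRun1 T NNeg p u q v π)
    (hQ : ∀ t ∈ T, t.2.2 ∈ Q) (hT : tnorm1 T ≤ 1) (hp : p ∈ Q) (t : ℕ) :
    min u v - Q.card ^ 2 ≤ counterAt u π t := by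
  by_contra! ht
  have htL : t ≤ π.length := by
    by_contra! htL
    rw [h.1.counterAt_of_length_le htL.le] at ht
    linarith [min_le_right u v, sq_nonneg (Q.card : ℤ)]
  obtain ⟨i₁, i₂, j₂, j₁, h12, h23, h34, h4, hs₁, hs₂, hlt, he₁, he₂, -⟩ :=
    exists_nested_cycles (f := fun k => -counterAt u π k) (M := -min u v) Q (stateAt p π)
      (h.1.stateAt_mem hQ hp)
      (fun k => by rw [← abs_neg]; convert h.1.abs_counterAt_succ_sub_le hT k using 2; ring)
      htL (by simp) (by rw [h.1.counterAt_of_length_le le_rfl]; simp) (by linarith)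
  simp only [neg_lt_neg_iff, neg_inj] at hlt he₁ he₂
  obtain ⟨π', h', hlt'⟩ := h.1.exists_shorter_of_cycles h12 h23 h34.le h4 hs₁ hs₂
    (by rw [he₁, he₂]) fun t' _ _ => by linarith [h.1.counterAt_nonneg t']
  exact (h.2 π' h').not_gt hlt'

lemma IsShortestRun1.length_add_one_le (h : IsShortestRun1 T NNeg p u q v π)
    (hQ : ∀ t ∈ T, t.2.2 ∈ Q) (hT : tnorm1 T ≤ 1) (hp : p ∈ Q) :
    π.length + 1 ≤ Q.card * ((v - u).natAbs + 2 * Q.card ^ 2 + 1) := by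
  have hmaps : ∀ t ∈ Finset.range (π.length + 1), (stateAt p π t, counterAt u π t) ∈
      Q ×ˢ Finset.Icc (min u v - Q.card ^ 2) (max u v + Q.card ^ 2) := fun t _ =>
    Finset.mk_mem_product (h.1.stateAt_mem hQ hp t)
      (Finset.mem_Icc.mpr ⟨h.le_counterAt hQ hT hp t, h.counterAt_le hQ hT hp t⟩)
  have hinj : Set.InjOn (fun t => (stateAt p π t, counterAt u π t))
      (Finset.range (π.length + 1)) := by
    intro a ha b hb hab
    simp only [Finset.coe_range, Set.mem_Iio, Prod.mk.injEq] at ha hb hab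
    by_contra hne
    wlog hlt : a < b generalizing a b
    · exact this hb ha ⟨hab.1.symm, hab.2.symm⟩ (Ne.symm hne) (by omega)
    obtain ⟨π', h', hlt'⟩ := h.1.exists_shorter_of_cycles hlt (by omega) le_rfl le_rfl hab.1 rfl
      (by rw [hab.2]; ring) fun t _ _ => by linarith [h.1.counterAt_nonneg t]
    exact (h.2 π' h').not_gt hlt'
  have hcard := Finset.card_le_card_of_injOn _ (fun t ht => Finset.mem_coe.mpr (hmaps t ht)) hinj
  rwa [Finset.card_range, Finset.card_product, Int.card_Icc,
    show max u v + Q.card ^ 2 + 1 - (min u v - Q.card ^ 2)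
      = (((v - u).natAbs + 2 * Q.card ^ 2 + 1 : ℕ) : ℤ) by
        push_cast; rw [← max_sub_min_eq_abs]; ring,
    Int.toNat_natCast] at hcard

end ShortestRuns

/-- In a 1-VASS with unary updates, reachable configurations
are connected by a run of length at most `(|Q|+1)^c + |Q|·|v−u|`. -/
theorem statement9 :
    ∃ c : ℕ, ∀ (Q : Finset ℕ) (T : Finset Trans1),
      (∀ t ∈ T, t.1 ∈ Q ∧ t.2.2 ∈ Q) →
      (∀ t ∈ T, t.2.1 = -1 ∨ t.2.1 = 0 ∨ t.2.1 = 1) →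
      ∀ p ∈ Q, ∀ q ∈ Q, ∀ u v : ℕ,
        Reach1 T NNeg p (u : ℤ) q (v : ℤ) →
        ∃ π, Run1 T NNeg p (u : ℤ) q (v : ℤ) π ∧
          π.length ≤ (Q.card + 1) ^ c + Q.card * ((v : ℤ) - (u : ℤ)).natAbs := by
  refine ⟨4, fun Q T hQ hU p hp q _ u v hreach => ?_⟩
  obtain ⟨π, hπ⟩ := hreach.exists_isShortestRun1
  have hlen := hπ.length_add_one_le (fun t ht => (hQ t ht).2) (tnorm1_le_one hU) hp
  refine ⟨π, hπ.1, ?_⟩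
  nlinarith [hlen]

end VASS
end
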